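/- arXiv:1008.2608 — 3 statements merged into one kernel-verified Lean document; each statement's English description precedes it below -/
import Mathlib

section
/- Let Λ ⊆ ℝⁿ be a polyhedron. Then the collection {rec(F) | F a face of Λ} of recession cones of the faces of Λ coincides exactly with the collection of faces of the recession cone rec(Λ). In particular, this collection is a conic polyhedral complex. -/
open Set Pointwise

variable {E : Type*} [NormedAddCommGroup E] [NormedSpace ℝ E]

/-- A polyhedron: an intersection of finitely many closed halfspaces. -/
def IsPolyhedron (S : Set E) : Prop :=
  ∃ (m : ℕ) (f : Fin m → E →ₗ[ℝ] ℝ) (b : Fin m → ℝ), S = {x | ∀ i, f i x ≤ b i}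

/-- A polytope: the convex hull of a (nonempty) finite set of points. -/
def IsPolytope (S : Set E) : Prop :=
  ∃ F : Finset E, F.Nonempty ∧ S = convexHull ℝ (F : Set E)

/-- A convex polyhedral cone: the set of nonnegative combinations of finitely
many vectors. -/
def IsPolyhedralCone (S : Set E) : Prop :=
  ∃ F : Finset E, S = {x | ∃ c : E → ℝ, (∀ v, 0 ≤ c v) ∧ x = ∑ v ∈ F, c v • v}

/-- The local recession cone of `S` at `p`:
`{u | p + t • u ∈ S for all t ≥ 0}`. -/
def locRec (S : Set E) (p : E) : Set E := {u | ∀ t : ℝ, 0 ≤ t → p + t • u ∈ S}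

/-- The recession cone of a set: the intersection of all local recession
cones. -/
def recSet (S : Set E) : Set E := ⋂ p ∈ S, locRec S p

/-- The recession cone of a polyhedron: `{u | S + u ⊆ S}`. -/
def recPoly (S : Set E) : Set E := {u | ∀ x ∈ S, x + u ∈ S}

/-- `S_x`: the set of points of `S` minimizing the linear functional `x`. -/
def faceSet (S : Set E) (x : E →ₗ[ℝ] ℝ) : Set E := {u ∈ S | ∀ v ∈ S, x u ≤ x v}

/-- A face of `S`: a nonempty subset of the form `S_x`. -/
def IsFaceOf (F S : Set E) : Prop := F.Nonempty ∧ ∃ x : E →ₗ[ℝ] ℝ, F = faceSet S x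

/-- A polyhedral complex: a nonempty finite collection of (nonempty) polyhedra,
closed under taking faces, in which any two members that meet intersect in a
common face. -/
def IsPolyComplex (P : Set (Set E)) : Prop :=
  P.Nonempty ∧ P.Finite ∧ (∀ S ∈ P, IsPolyhedron S ∧ S.Nonempty) ∧
  (∀ S ∈ P, ∀ F : Set E, IsFaceOf F S → F ∈ P) ∧
  ∀ S ∈ P, ∀ T ∈ P, (S ∩ T).Nonempty → IsFaceOf (S ∩ T) S ∧ IsFaceOf (S ∩ T) T

/-- The support of a collection of sets. -/
def polySupport (P : Set (Set E)) : Set E := ⋃ S ∈ P, S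

/-- The Minkowski-Weyl condition: every local recession cone equals the global
recession cone. -/
def MWCondition (S : Set E) : Prop := ∀ p ∈ S, locRec S p = recSet S

/-- A conic polyhedral complex: a polyhedral complex all of whose members are
convex polyhedral cones. -/
def IsConicPolyComplex (P : Set (Set E)) : Prop :=
  IsPolyComplex P ∧ ∀ S ∈ P, IsPolyhedralCone S

/-- Strongly convex: contains no affine line. -/
def StronglyConvexSet (S : Set E) : Prop :=
  ¬ ∃ p d : E, d ≠ 0 ∧ ∀ t : ℝ, p + t • d ∈ S

/-- A fan: a conic polyhedral complex all of whose members are strongly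
convex. -/
def IsFan (P : Set (Set E)) : Prop :=
  IsConicPolyComplex P ∧ ∀ S ∈ P, StronglyConvexSet S

/-- The recession of a complex: the collection of recession cones of its
members. -/
def recComplex (P : Set (Set E)) : Set (Set E) := {C | ∃ Λ ∈ P, C = recPoly Λ}

/-- The cone `c(S)` over a set `S ⊆ E`, inside `E × ℝ`: the closure of
`{t • (u, 1) | u ∈ S, t > 0}`. -/
def coneOver (S : Set E) : Set (E × ℝ) :=
  closure {y | ∃ u ∈ S, ∃ t : ℝ, 0 < t ∧ y = t • (u, (1 : ℝ))}

/-- The open cone `c°(S)` over `S`: `{t • (u, 1) | u ∈ S, t > 0}`. -/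
def openCone (S : Set E) : Set (E × ℝ) :=
  {y | ∃ u ∈ S, ∃ t : ℝ, 0 < t ∧ y = t • (u, (1 : ℝ))}

/-- The cone `c(Π)` of a complex: the cones over its members together with the
recession cones of its members placed at height `0`. -/
def coneComplex (P : Set (Set E)) : Set (Set (E × ℝ)) :=
  {C | ∃ Λ ∈ P, C = coneOver Λ} ∪
  {C | ∃ Λ ∈ P, C = (recPoly Λ) ×ˢ ({0} : Set ℝ)}

/-- `aff` of a conic complex in `E × ℝ`: the nonempty intersections of its
members with the hyperplane `E × {1}`, regarded as subsets of `E`. -/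
def affOf (P : Set (Set (E × ℝ))) : Set (Set E) :=
  {L | L.Nonempty ∧ ∃ σ ∈ P, L = {u | (u, (1 : ℝ)) ∈ σ}}

/-- A polyhedral set: a finite union of polyhedra. -/
def IsPolyhedralSet (S : Set E) : Prop :=
  ∃ (k : ℕ) (f : Fin k → Set E), (∀ i, IsPolyhedron (f i)) ∧ S = ⋃ i, f i

/-- A finite union of polytopes. -/
def IsFiniteUnionOfPolytopes (S : Set E) : Prop :=
  ∃ (k : ℕ) (f : Fin k → Set E), (∀ i, IsPolytope (f i)) ∧ S = ⋃ i, f i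


/-! ### Auxiliary machinery -/

set_option linter.unusedSectionVars false

section InConeAux
variable {V : Type*} [AddCommGroup V] [Module ℝ V]

/-- Membership in the cone generated by a finite set. -/
def InCone (F : Finset V) (x : V) : Prop :=
  ∃ c : V → ℝ, (∀ v, 0 ≤ c v) ∧ x = ∑ v ∈ F, c v • v

lemma InCone.zero (F : Finset V) : InCone F 0 :=
  ⟨0, fun _ => le_rfl, by simp⟩

lemma InCone.gen {F : Finset V} {v : V} (hv : v ∈ F) : InCone F v := by
  classical
  refine ⟨fun w => if w = v then 1 else 0, fun w => by positivity, ?_⟩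
  rw [Finset.sum_congr rfl (fun w _ => ?_)]
  · rw [Finset.sum_ite_eq' F v (fun w => w), if_pos hv]
  · show (if w = v then (1:ℝ) else 0) • w = if w = v then w else 0
    split_ifs <;> simp

lemma InCone.add {F : Finset V} {x y : V} (hx : InCone F x) (hy : InCone F y) :
    InCone F (x + y) := by
  obtain ⟨c, hc, rfl⟩ := hx
  obtain ⟨d, hd, rfl⟩ := hy
  exact ⟨c + d, fun v => add_nonneg (hc v) (hd v), by
    simp [add_smul, Finset.sum_add_distrib]⟩

lemma InCone.smul {F : Finset V} {x : V} {t : ℝ} (ht : 0 ≤ t) (hx : InCone F x) :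
    InCone F (t • x) := by
  obtain ⟨c, hc, rfl⟩ := hx
  exact ⟨t • c, fun v => mul_nonneg ht (hc v), by
    simp [Finset.smul_sum, smul_smul]⟩

lemma InCone.sum {F : Finset V} {ι : Type*} (s : Finset ι) (g : ι → V)
    (h : ∀ i ∈ s, InCone F (g i)) : InCone F (∑ i ∈ s, g i) := by
  classical
  induction s using Finset.induction_on with
  | empty => simpa using InCone.zero F
  | insert a s hnot ih =>
    rw [Finset.sum_insert hnot]
    exact (h _ (Finset.mem_insert_self _ _)).add
      (ih (fun i hi => h i (Finset.mem_insert_of_mem hi)))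

lemma InCone.mono {F F' : Finset V} (hFF : F ⊆ F') {x : V} (hx : InCone F x) :
    InCone F' x := by
  classical
  obtain ⟨c, hc, rfl⟩ := hx
  refine ⟨fun v => if v ∈ F then c v else 0,
    fun v => by dsimp; split_ifs; exacts [hc v, le_rfl], ?_⟩
  rw [← Finset.sum_subset hFF (fun v _ hv => by simp [hv])]
  exact Finset.sum_congr rfl fun v hv => by simp [hv]

/-- Double description step: a finitely generated cone intersected with a
halfspace `{g ≤ 0}` is finitely generated. -/
lemma cone_inter_halfspace (G : Finset V) (g : V →ₗ[ℝ] ℝ) :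
    ∃ G' : Finset V, ∀ x, (InCone G x ∧ g x ≤ 0) ↔ InCone G' x := by
  classical
  set P : Finset V := G.filter fun v => 0 < g v with hP
  set N : Finset V := G.filter fun v => g v ≤ 0 with hN
  set comb : V × V → V := fun p => (g p.1) • p.2 - (g p.2) • p.1 with hcomb
  refine ⟨N ∪ (P ×ˢ N).image comb, fun x => ⟨?_, ?_⟩⟩
  · rintro ⟨⟨c, hc, rfl⟩, hgx⟩
    -- split the sum over G into P and N parts
    have hsplit : ∑ v ∈ G, c v • v = ∑ v ∈ P, c v • v + ∑ v ∈ N, c v • v := by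
      rw [hP, hN, ← Finset.sum_filter_add_sum_filter_not G (fun v => 0 < g v)]
      congr 1
      exact Finset.sum_congr (Finset.filter_congr fun v _ => by simp [not_lt]) fun _ _ => rfl
    set SP := ∑ v ∈ P, c v • v with hSP
    set SN := ∑ v ∈ N, c v • v with hSN
    set s := ∑ v ∈ P, c v * g v with hs
    set t := ∑ v ∈ N, c v * g v with ht
    have hgsum : s + t ≤ 0 := by
      have : g (∑ v ∈ G, c v • v) = s + t := by
        rw [hsplit, map_add, map_sum, map_sum]
        simp [smul_eq_mul, hs, ht]
      linarith [this ▸ hgx]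
    have hs0 : 0 ≤ s := Finset.sum_nonneg fun v hv =>
      mul_nonneg (hc v) (le_of_lt (Finset.mem_filter.mp hv).2)
    by_cases hsz : s = 0
    · -- all P coefficients vanish
      have hPz : ∀ v ∈ P, c v • v = 0 := by
        intro v hv
        have := (Finset.sum_eq_zero_iff_of_nonneg fun v hv =>
          mul_nonneg (hc v) (le_of_lt (Finset.mem_filter.mp hv).2)).mp hsz v hv
        have hgv : 0 < g v := (Finset.mem_filter.mp hv).2
        have : c v = 0 := by
          rcases mul_eq_zero.mp this with h | h
          · exact h
          · exact absurd h (ne_of_gt hgv)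
        simp [this]
      have : ∑ v ∈ G, c v • v = SN := by
        rw [hsplit, hSP, Finset.sum_eq_zero hPz, zero_add]
      rw [this, hSN]
      exact InCone.sum _ _ fun v hv =>
        (InCone.gen (Finset.mem_union_left _ hv)).smul (hc v)
    · have hspos : 0 < s := lt_of_le_of_ne hs0 (Ne.symm hsz)
      have htneg : t < 0 := by linarith
      set T := -t with hT
      have hTpos : 0 < T := by simp [hT]; linarith
      -- the big identity
      have key1 : ∀ v ∈ P, ∑ w ∈ N, ((c v * c w)/T) • comb (v, w)
          = (c v / T) • (g v • SN) - (c v / T) • (t • v) := by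
        intro v hv
        have hterm : ∀ w ∈ N, ((c v * c w)/T) • comb (v, w)
            = (c v / T) • (g v • (c w • w)) - (c v / T) • ((c w * g w) • v) := by
          intro w hw
          show ((c v * c w)/T) • ((g v) • w - (g w) • v) = _
          match_scalars <;> ring
        rw [Finset.sum_congr rfl hterm, Finset.sum_sub_distrib, ← Finset.smul_sum,
            ← Finset.smul_sum, ← Finset.smul_sum, ← Finset.sum_smul]
      have key2 : ∑ p ∈ P ×ˢ N, ((c p.1 * c p.2)/T) • comb p
          = (s/T) • SN - (t/T) • SP := by
        rw [Finset.sum_product, Finset.sum_congr rfl key1, Finset.sum_sub_distrib]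
        congr 1
        · rw [hSN]
          have : ∀ v ∈ P, (c v / T) • (g v • SN) = ((c v * g v)/T) • SN := by
            intro v hv; rw [smul_smul]; congr 1; ring
          rw [Finset.sum_congr rfl this, ← Finset.sum_smul, ← Finset.sum_div, ← hs, hSN]
        · have : ∀ v ∈ P, (c v / T) • (t • v) = (t/T) • (c v • v) := by
            intro v hv; rw [smul_smul, smul_smul]; congr 1; ring
          rw [Finset.sum_congr rfl this, ← Finset.smul_sum, hSP]
      have hident : ∑ v ∈ G, c v • v
          = (∑ p ∈ P ×ˢ N, ((c p.1 * c p.2)/T) • comb p) + (1 - s/T) • SN := by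
        rw [hsplit, key2]
        have htT : t/T = -1 := by
          rw [hT, div_neg, div_self htneg.ne]
        rw [htT]
        module
      rw [hident]
      refine InCone.add (InCone.sum _ _ fun p hp => ?_) (InCone.smul ?_ ?_)
      · refine InCone.smul (div_nonneg (mul_nonneg (hc _) (hc _)) hTpos.le)
          (InCone.gen (Finset.mem_union_right _ ?_))
        exact Finset.mem_image_of_mem comb hp
      · have hsT : s ≤ T := by linarith
        have := div_le_one_of_le₀ hsT (le_of_lt hTpos)
        linarith
      · rw [hSN]
        exact InCone.sum _ _ fun v hv =>
          (InCone.gen (Finset.mem_union_left _ hv)).smul (hc v)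
  · rintro ⟨c, hc, rfl⟩
    have hmem : ∀ v ∈ N ∪ (P ×ˢ N).image comb, InCone G v ∧ g v ≤ 0 := by
      intro v hv
      rcases Finset.mem_union.mp hv with hv | hv
      · exact ⟨InCone.gen (Finset.filter_subset _ _ hv), (Finset.mem_filter.mp hv).2⟩
      · obtain ⟨p, hp, rfl⟩ := Finset.mem_image.mp hv
        obtain ⟨hp1, hp2⟩ := Finset.mem_product.mp hp
        have h1 : 0 < g p.1 := (Finset.mem_filter.mp hp1).2
        have h2 : g p.2 ≤ 0 := (Finset.mem_filter.mp hp2).2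
        constructor
        · have : comb p = g p.1 • p.2 + (-(g p.2)) • p.1 := by
            show (g p.1) • p.2 - (g p.2) • p.1 = _; module
          rw [this]
          exact ((InCone.gen (Finset.filter_subset _ _ hp2)).smul h1.le).add
            ((InCone.gen (Finset.filter_subset _ _ hp1)).smul (by linarith))
        · show g ((g p.1) • p.2 - (g p.2) • p.1) ≤ 0
          rw [map_sub, map_smul, map_smul]
          simp [smul_eq_mul]
          ring_nf
          simp
    constructor
    · exact InCone.sum _ _ fun v hv => ((hmem v hv).1).smul (hc v)
    · rw [map_sum]
      refine Finset.sum_nonpos fun v hv => ?_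
      rw [map_smul, smul_eq_mul]
      exact mul_nonpos_of_nonneg_of_nonpos (hc v) (hmem v hv).2

end InConeAux

/-- Base case: every vector of `ℝⁿ` is a nonnegative combination of `±` basis
vectors. -/
lemma univ_inCone {n : ℕ} :
    ∃ G : Finset (Fin n → ℝ), ∀ u : Fin n → ℝ, InCone G u := by
  classical
  refine ⟨(Finset.univ.image fun i : Fin n => Pi.single i (1:ℝ)) ∪
    (Finset.univ.image fun i : Fin n => -Pi.single i (1:ℝ)), fun u => ?_⟩
  have hu : u = ∑ i : Fin n, u i • (Pi.single i (1:ℝ) : Fin n → ℝ) := by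
    ext j
    simp [Finset.sum_apply, Pi.single_apply]
  rw [hu]
  refine InCone.sum _ _ fun i _ => ?_
  rcases le_or_gt 0 (u i) with h | h
  · exact InCone.smul h (InCone.gen (Finset.mem_union_left _
      (Finset.mem_image_of_mem _ (Finset.mem_univ i))))
  · have : u i • (Pi.single i (1:ℝ) : Fin n → ℝ)
        = (-u i) • (-(Pi.single i (1:ℝ) : Fin n → ℝ)) := by
      rw [smul_neg, ← neg_smul, neg_neg]
    rw [this]
    exact InCone.smul (by linarith) (InCone.gen (Finset.mem_union_right _
      (Finset.mem_image_of_mem _ (Finset.mem_univ i))))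

lemma hcone_fg {n : ℕ} (l : List ((Fin n → ℝ) →ₗ[ℝ] ℝ)) :
    ∃ G : Finset (Fin n → ℝ), ∀ x, (∀ φ ∈ l, φ x ≤ 0) ↔ InCone G x := by
  induction l with
  | nil =>
    obtain ⟨G, hG⟩ := univ_inCone (n := n)
    exact ⟨G, fun x => ⟨fun _ => hG x, fun _ => by simp⟩⟩
  | cons g l ih =>
    obtain ⟨G, hG⟩ := ih
    obtain ⟨G', hG'⟩ := cone_inter_halfspace G g
    refine ⟨G', fun x => ?_⟩
    rw [← hG' x, ← hG x]
    constructor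
    · intro h
      exact ⟨fun φ hφ => h φ (List.mem_cons_of_mem _ hφ), h g List.mem_cons_self⟩
    · rintro ⟨h1, h2⟩ φ hφ
      rcases List.mem_cons.mp hφ with rfl | hφ
      · exact h2
      · exact h1 φ hφ

/-- **Weyl**: every H-cone in `ℝⁿ` is a finitely generated cone. -/
lemma hcone_isPolyhedralCone {n : ℕ} {ι : Type*} [Fintype ι]
    (g : ι → (Fin n → ℝ) →ₗ[ℝ] ℝ) :
    IsPolyhedralCone {u : Fin n → ℝ | ∀ i, g i u ≤ 0} := by
  classical
  obtain ⟨G, hG⟩ := hcone_fg (Finset.univ.toList.map g)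
  refine ⟨G, ?_⟩
  ext x
  rw [Set.mem_setOf_eq, show ({x | ∃ c : (Fin n → ℝ) → ℝ, (∀ v, 0 ≤ c v) ∧
    x = ∑ v ∈ G, c v • v} : Set (Fin n → ℝ)) = {x | InCone G x} from rfl,
    Set.mem_setOf_eq, ← hG x]
  constructor
  · intro h φ hφ
    obtain ⟨i, _, rfl⟩ := List.mem_map.mp hφ
    exact h i
  · intro h i
    exact h (g i) (List.mem_map.mpr ⟨i, by simp, rfl⟩)

section MinExists
variable {V : Type*} [AddCommGroup V] [Module ℝ V]

/-- From any feasible point and any descent direction, one can move to the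
boundary of some constraint without increasing the objective. -/
lemma move_to_boundary {m : ℕ} (f : Fin m → V →ₗ[ℝ] ℝ) (b : Fin m → ℝ)
    (x : V →ₗ[ℝ] ℝ) (hrec : ∀ e, (∀ i, f i e ≤ 0) → 0 ≤ x e)
    (p : V) (hp : ∀ i, f i p ≤ b i) (d : V) (hd : x d < 0) :
    ∃ j q, f j ≠ 0 ∧ (∀ i, f i q ≤ b i) ∧ f j q = b j ∧ x q ≤ x p := by
  classical
  set A : Finset (Fin m) := Finset.univ.filter fun i => 0 < f i d with hA
  have hAne : A.Nonempty := by
    by_contra hA0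
    refine absurd (hrec d fun i => ?_) (not_le.mpr hd)
    by_contra hcon
    exact hA0 ⟨i, Finset.mem_filter.mpr ⟨Finset.mem_univ _, not_le.mp hcon⟩⟩
  obtain ⟨j, hjA, hjmin⟩ := Finset.exists_min_image A (fun i => (b i - f i p) / f i d) hAne
  have hfjd : 0 < f j d := (Finset.mem_filter.mp hjA).2
  set t := (b j - f j p) / f j d with htdef
  have ht0 : 0 ≤ t := div_nonneg (sub_nonneg.mpr (hp j)) hfjd.le
  have happ : ∀ (φ : V →ₗ[ℝ] ℝ), φ (p + t • d) = φ p + t * φ d := by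
    intro φ; rw [map_add, map_smul, smul_eq_mul]
  refine ⟨j, p + t • d, ?_, ?_, ?_, ?_⟩
  · intro h0
    rw [h0] at hfjd; simp at hfjd
  · intro i
    rw [happ]
    by_cases hi : 0 < f i d
    · have hiA : i ∈ A := Finset.mem_filter.mpr ⟨Finset.mem_univ _, hi⟩
      have := hjmin i hiA
      have := (le_div_iff₀ hi).mp this
      linarith
    · have := mul_nonpos_of_nonneg_of_nonpos ht0 (not_lt.mp hi)
      have := hp i
      linarith
  · rw [happ, htdef, div_mul_cancel₀ _ hfjd.ne']
    ring
  · rw [happ]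
    nlinarith

end MinExists

/-- A linear functional that is nonnegative on the recession cone of a nonempty
polyhedron attains its minimum on it. -/
lemma min_exists (N : ℕ) :
    ∀ (V : Type) [AddCommGroup V] [Module ℝ V] [FiniteDimensional ℝ V],
    Module.finrank ℝ V ≤ N → ∀ (m : ℕ) (f : Fin m → V →ₗ[ℝ] ℝ) (b : Fin m → ℝ)
    (x : V →ₗ[ℝ] ℝ) (p₀ : V), (∀ i, f i p₀ ≤ b i) →
    (∀ e, (∀ i, f i e ≤ 0) → 0 ≤ x e) →
    ∃ p, (∀ i, f i p ≤ b i) ∧ ∀ v, (∀ i, f i v ≤ b i) → x p ≤ x v := by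
  induction N with
  | zero =>
    intro V _ _ _ hrk m f b x p₀ hp₀ hrec
    refine ⟨p₀, hp₀, fun v hv => ?_⟩
    have : Subsingleton V := Module.finrank_zero_iff.mp (Nat.le_zero.mp hrk)
    rw [Subsingleton.elim v p₀]
  | succ N IH =>
    intro V _ _ _ hrk m f b x p₀ hp₀ hrec
    by_cases hx : ∀ d, 0 ≤ x d
    · refine ⟨p₀, hp₀, fun v hv => ?_⟩
      have := hx (v - p₀)
      rw [map_sub] at this
      linarith
    · push_neg at hx
      obtain ⟨d, hd⟩ := hx
      classical
      set T : Finset (Fin m) :=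
        Finset.univ.filter fun j => f j ≠ 0 ∧ ∃ r, (∀ i, f i r ≤ b i) ∧ f j r = b j with hT
      have key : ∀ j ∈ T, ∃ q, (∀ i, f i q ≤ b i) ∧ f j q = b j ∧
          ∀ v, (∀ i, f i v ≤ b i) → f j v = b j → x q ≤ x v := by
        intro j hj
        obtain ⟨hfj, r, hr, hrj⟩ := (Finset.mem_filter.mp hj).2
        set K := LinearMap.ker (f j) with hK
        have hrank : Module.finrank ℝ K ≤ N := by
          have hlt : Module.finrank ℝ K < Module.finrank ℝ V := Submodule.finrank_lt
            (by rwa [hK, ne_eq, LinearMap.ker_eq_top])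
          omega
        obtain ⟨p', hp'1, hp'2⟩ := IH K hrank m
          (fun i => (f i).comp K.subtype) (fun i => b i - f i r)
          (x.comp K.subtype) 0
          (fun i => by simpa using hr i)
          (fun e he => hrec (e : V) (fun i => he i))
        refine ⟨r + (p' : V), fun i => ?_, ?_, fun v hv hvj => ?_⟩
        · have := hp'1 i
          simp only [LinearMap.comp_apply, Submodule.coe_subtype] at this
          rw [map_add]; linarith
        · have : f j (p' : V) = 0 := p'.2
          rw [map_add, this, hrj, add_zero]
        · have hvK : v - r ∈ K := by
            rw [hK, LinearMap.mem_ker, map_sub, hvj, hrj, sub_self]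
          have := hp'2 ⟨v - r, hvK⟩ (fun i => by
            simp only [LinearMap.comp_apply, Submodule.coe_subtype, map_sub]
            have := hv i; linarith)
          simp only [LinearMap.comp_apply, Submodule.coe_subtype, map_sub] at this
          rw [map_add]
          linarith
      choose Q hQ1 hQ2 hQ3 using key
      have hTne : T.Nonempty := by
        obtain ⟨j, q, hfj, hq, hqj, _⟩ := move_to_boundary f b x hrec p₀ hp₀ d hd
        exact ⟨j, Finset.mem_filter.mpr ⟨Finset.mem_univ _, hfj, q, hq, hqj⟩⟩
      obtain ⟨j₀, _, hmin⟩ := Finset.exists_min_image T.attach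
        (fun j => x (Q j.1 j.2)) (hTne.attach)
      refine ⟨Q j₀.1 j₀.2, hQ1 _ _, fun v hv => ?_⟩
      obtain ⟨j, q, hfj, hq, hqj, hxq⟩ := move_to_boundary f b x hrec v hv d hd
      have hjT : j ∈ T := Finset.mem_filter.mpr ⟨Finset.mem_univ _, hfj, q, hq, hqj⟩
      calc x (Q j₀.1 j₀.2) ≤ x (Q j hjT) := hmin ⟨j, hjT⟩ (Finset.mem_attach _ _)
        _ ≤ x q := hQ3 j hjT q hq hqj
        _ ≤ x v := hxq

section FaceLemmas
variable {ι : Type*} [Fintype ι] {m : ℕ}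

/-- On a cone `{g ≤ 0}`, the face of a functional nonnegative on it is the
intersection with its kernel. -/
lemma faceSet_cone_eq (g : ι → E →ₗ[ℝ] ℝ) (x : E →ₗ[ℝ] ℝ)
    (hx : ∀ u, (∀ i, g i u ≤ 0) → 0 ≤ x u) :
    faceSet {u | ∀ i, g i u ≤ 0} x = {u | (∀ i, g i u ≤ 0) ∧ x u = 0} := by
  ext u
  constructor
  · rintro ⟨hu, hmin⟩
    refine ⟨hu, le_antisymm ?_ (hx u hu)⟩
    have := hmin 0 (fun i => by simp)
    simpa using this
  · rintro ⟨hu, h0⟩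
    exact ⟨hu, fun v hv => by rw [h0]; exact hx v hv⟩

/-- The functional of a nonempty face is nonnegative on the recession cone. -/
lemma face_nonneg (f : Fin m → E →ₗ[ℝ] ℝ) (b : Fin m → ℝ) (x : E →ₗ[ℝ] ℝ)
    {p₀ : E} (hp₀ : p₀ ∈ faceSet {u | ∀ i, f i u ≤ b i} x) :
    ∀ u, (∀ i, f i u ≤ 0) → 0 ≤ x u := by
  intro u hu
  have h1 : p₀ + u ∈ {u | ∀ i, f i u ≤ b i} := by
    intro i
    have := hp₀.1 i
    have := hu i
    rw [map_add]
    linarith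
  have := hp₀.2 (p₀ + u) h1
  rw [map_add] at this
  linarith

/-- The recession cone of a polyhedron. -/
lemma rec_eq (f : Fin m → E →ₗ[ℝ] ℝ) (b : Fin m → ℝ)
    (hne : ({u | ∀ i, f i u ≤ b i} : Set E).Nonempty) :
    recPoly {u | ∀ i, f i u ≤ b i} = {u | ∀ i, f i u ≤ 0} := by
  ext u
  constructor
  · intro hu
    obtain ⟨p, hp⟩ := hne
    have iter : ∀ k : ℕ, p + k • u ∈ {u | ∀ i, f i u ≤ b i} := by
      intro k
      induction k with
      | zero => simpa using hp
      | succ k ih =>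
        have := hu _ ih
        rw [succ_nsmul, ← add_assoc]
        exact this
    intro i
    by_contra hcon
    push_neg at hcon
    obtain ⟨k, hk⟩ := exists_nat_gt ((b i - f i p) / f i u)
    have hki := iter k i
    rw [map_add, map_nsmul, nsmul_eq_mul] at hki
    rw [div_lt_iff₀ hcon] at hk
    linarith
  · intro hu y hy i
    have := hy i
    have := hu i
    rw [map_add]
    linarith

/-- The recession cone of a nonempty face is the corresponding face of the
recession cone. -/
lemma rec_face (f : Fin m → E →ₗ[ℝ] ℝ) (b : Fin m → ℝ) (x : E →ₗ[ℝ] ℝ)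
    {p₀ : E} (hp₀ : p₀ ∈ faceSet {u | ∀ i, f i u ≤ b i} x) :
    recPoly (faceSet {u | ∀ i, f i u ≤ b i} x)
      = {u | (∀ i, f i u ≤ 0) ∧ x u = 0} := by
  ext u
  constructor
  · intro hu
    have iter : ∀ k : ℕ, p₀ + k • u ∈ faceSet {u | ∀ i, f i u ≤ b i} x := by
      intro k
      induction k with
      | zero => simpa using hp₀
      | succ k ih =>
        have := hu _ ih
        rw [succ_nsmul, ← add_assoc]
        exact this
    constructor
    · intro i
      by_contra hcon
      push_neg at hcon
      obtain ⟨k, hk⟩ := exists_nat_gt ((b i - f i p₀) / f i u)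
      have hki := (iter k).1 i
      rw [map_add, map_nsmul, nsmul_eq_mul] at hki
      rw [div_lt_iff₀ hcon] at hk
      linarith
    · have hq : p₀ + u ∈ faceSet {u | ∀ i, f i u ≤ b i} x := by
        simpa using iter 1
      have h1 := hq.2 p₀ hp₀.1
      have h2 := hp₀.2 (p₀ + u) hq.1
      rw [map_add] at h1 h2
      linarith
  · rintro ⟨hu, hx0⟩ y hy
    refine ⟨fun i => ?_, fun v hv => ?_⟩
    · have := hy.1 i
      have := hu i
      rw [map_add]
      linarith
    · rw [map_add, hx0, add_zero]
      exact hy.2 v hv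

/-- Every nonempty face of an H-cone is obtained by turning some inequalities
into equalities. -/
lemma face_of_cone_eq (g : ι → E →ₗ[ℝ] ℝ) (x : E →ₗ[ℝ] ℝ)
    (hne : (faceSet {u | ∀ i, g i u ≤ 0} x).Nonempty) :
    ∃ I : Finset ι,
      faceSet {u | ∀ i, g i u ≤ 0} x
        = {u | (∀ i, g i u ≤ 0) ∧ ∀ i ∈ I, g i u = 0} := by
  classical
  obtain ⟨c0, hc0⟩ := hne
  have hxK : ∀ u, (∀ i, g i u ≤ 0) → 0 ≤ x u := by
    intro u hu
    have h1 : c0 + u ∈ {u | ∀ i, g i u ≤ 0} := by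
      intro i
      have := hc0.1 i
      have := hu i
      rw [map_add]
      linarith
    have := hc0.2 (c0 + u) h1
    rw [map_add] at this
    linarith
  have hC := faceSet_cone_eq g x hxK
  set C := faceSet {u | ∀ i, g i u ≤ 0} x with hCdef
  refine ⟨Finset.univ.filter fun i => ∀ u ∈ C, g i u = 0, ?_⟩
  ext u
  constructor
  · intro hu
    exact ⟨hu.1, fun i hi => (Finset.mem_filter.mp hi).2 u hu⟩
  · rintro ⟨huK, huI⟩
    rw [hC]
    refine ⟨huK, le_antisymm ?_ (hxK u huK)⟩
    by_cases hall : ∀ i, ∀ u ∈ C, g i u = 0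
    · have hneg : ∀ i, g i (-u) ≤ 0 := by
        intro i
        rw [map_neg, huI i (Finset.mem_filter.mpr ⟨Finset.mem_univ _, hall i⟩)]
        simp
      have := hxK (-u) hneg
      rw [map_neg] at this
      linarith
    · push_neg at hall
      set I := Finset.univ.filter fun i => ∀ u ∈ C, g i u = 0 with hIdef
      set Ic := Finset.univ.filter fun i : ι => ¬ ∀ u ∈ C, g i u = 0 with hIcdef
      have hIcne : Ic.Nonempty := by
        obtain ⟨i₀, w, hw, hwne⟩ := hall
        exact ⟨i₀, Finset.mem_filter.mpr ⟨Finset.mem_univ _, fun hcon => hwne (hcon w hw)⟩⟩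
      have hwit : ∀ i ∈ Ic, ∃ w, w ∈ C ∧ g i w < 0 := by
        intro i hi
        have := (Finset.mem_filter.mp hi).2
        push_neg at this
        obtain ⟨w, hw, hwne⟩ := this
        refine ⟨w, hw, lt_of_le_of_ne ?_ hwne⟩
        rw [hC] at hw
        exact hw.1 i
      choose W hW1 hW2 using hwit
      set cstar := ∑ i ∈ Ic.attach, W i.1 i.2 with hcstardef
      have hsum_mem : ∀ (s : Finset Ic), (∑ i ∈ s, W i.1 i.2) ∈ C := by
        intro s
        induction s using Finset.induction_on with
        | empty =>
          rw [hC]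
          refine ⟨fun i => by simp, by simp⟩
        | @insert j s hnot ih =>
          rw [Finset.sum_insert hnot, hC]
          rw [hC] at ih
          have hWm := hW1 j.1 j.2
          rw [hC] at hWm
          refine ⟨fun i => ?_, ?_⟩
          · rw [map_add]
            have := hWm.1 i
            have := ih.1 i
            linarith
          · rw [map_add, hWm.2, ih.2, add_zero]
      have hcstarC : cstar ∈ C := hsum_mem _
      have hcstarK : ∀ i, g i cstar ≤ 0 := by
        rw [hC] at hcstarC; exact hcstarC.1
      have hxcstar : x cstar = 0 := by
        rw [hC] at hcstarC; exact hcstarC.2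
      have hI0 : ∀ i ∈ I, g i cstar = 0 := fun i hi =>
        (Finset.mem_filter.mp hi).2 cstar hcstarC
      have hIcneg : ∀ i ∈ Ic, g i cstar < 0 := by
        intro i hi
        have heq : g i cstar = ∑ j ∈ Ic.attach, g i (W j.1 j.2) := by
          rw [hcstardef, map_sum]
        rw [heq]
        have h := Finset.sum_lt_sum (s := Ic.attach)
          (f := fun j => g i (W j.1 j.2)) (g := fun _ => (0:ℝ))
          (fun j _ => by
            have hWm := hW1 j.1 j.2
            rw [hC] at hWm
            exact hWm.1 i)
          ⟨⟨i, hi⟩, Finset.mem_attach _ _, hW2 i hi⟩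
        simpa using h
      obtain ⟨i₁, hi₁, hmin⟩ := Finset.exists_min_image Ic (fun i => -(g i cstar)) hIcne
      obtain ⟨i₂, hi₂, hmax⟩ := Finset.exists_max_image Ic (fun i => -(g i u)) hIcne
      set a := -(g i₁ cstar) with ha
      have hapos : 0 < a := by
        have := hIcneg i₁ hi₁
        simp only [ha]
        linarith
      set Bm := -(g i₂ u) with hBm
      have hBm0 : 0 ≤ Bm := by
        have := huK i₂
        simp only [hBm]
        linarith
      set ε := a / (Bm + 1) with hε
      have hεpos : 0 < ε := div_pos hapos (by linarith)
      have hεB : ε * (Bm + 1) = a := by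
        rw [hε]; field_simp
      have hkey : ∀ i ∈ Ic, g i cstar - ε * g i u ≤ 0 := by
        intro i hi
        have h1 : -(g i u) ≤ Bm := hmax i hi
        have h2 : a ≤ -(g i cstar) := hmin i hi
        nlinarith [hεpos.le]
      have hv : ∀ i, g i (cstar - ε • u) ≤ 0 := by
        intro i
        rw [map_sub, map_smul, smul_eq_mul]
        by_cases hi : i ∈ I
        · rw [hI0 i hi, huI i hi]
          simp
        · exact hkey i (Finset.mem_filter.mpr ⟨Finset.mem_univ _,
            (by simpa [hIdef] using hi : ¬ ∀ u ∈ C, g i u = 0)⟩)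
      have := hxK _ hv
      rw [map_sub, map_smul, smul_eq_mul, hxcstar] at this
      nlinarith [hεpos]

/-- `C_{I ∪ J}` is a face of `C_I`. -/
lemma common_face [DecidableEq ι] (g : ι → E →ₗ[ℝ] ℝ) (I J : Finset ι) :
    IsFaceOf {u | (∀ i, g i u ≤ 0) ∧ ∀ i ∈ I ∪ J, g i u = 0}
      {u | (∀ i, g i u ≤ 0) ∧ ∀ i ∈ I, g i u = 0} := by
  classical
  constructor
  · exact ⟨0, fun i => by simp, fun i _ => by simp⟩
  · refine ⟨-(∑ j ∈ J, g j), ?_⟩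
    have hxval : ∀ u : E, (-(∑ j ∈ J, g j) : E →ₗ[ℝ] ℝ) u = ∑ j ∈ J, -(g j u) := by
      intro u
      simp [LinearMap.sum_apply]
    ext u
    constructor
    · rintro ⟨huK, huIJ⟩
      refine ⟨⟨huK, fun i hi => huIJ i (Finset.mem_union_left _ hi)⟩, fun v hv => ?_⟩
      have hu0 : (-(∑ j ∈ J, g j) : E →ₗ[ℝ] ℝ) u = 0 := by
        rw [hxval]
        exact Finset.sum_eq_zero fun j hj => by
          rw [huIJ j (Finset.mem_union_right _ hj)]; simp
      rw [hu0, hxval]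
      exact Finset.sum_nonneg fun j hj => by
        have := hv.1 j
        linarith
    · rintro ⟨⟨huK, huI⟩, hmin⟩
      refine ⟨huK, fun i hi => ?_⟩
      have h0mem : (0:E) ∈ {u | (∀ i, g i u ≤ 0) ∧ ∀ i ∈ I, g i u = 0} :=
        ⟨fun i => by simp, fun i _ => by simp⟩
      have hle := hmin 0 h0mem
      rw [map_zero, hxval] at hle
      have hge : ∀ j ∈ J, 0 ≤ -(g j u) := fun j _ => by
        have := huK j
        linarith
      have hall0 : ∀ j ∈ J, -(g j u) = 0 :=
        (Finset.sum_eq_zero_iff_of_nonneg hge).mp (le_antisymm hle (Finset.sum_nonneg hge))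
      rcases Finset.mem_union.mp hi with hi | hi
      · exact huI i hi
      · have := hall0 i hi
        linarith

/-- The extended constraint list defining `C_I` as an H-cone. -/
def extConstr {m : ℕ} (f : Fin m → E →ₗ[ℝ] ℝ) (I : Finset (Fin m)) :
    Fin m × Bool → E →ₗ[ℝ] ℝ :=
  fun p => if p.2 = true then f p.1 else if p.1 ∈ I then -(f p.1) else 0

lemma extConstr_set {m : ℕ} (f : Fin m → E →ₗ[ℝ] ℝ) (I : Finset (Fin m)) :
    {u : E | ∀ p, extConstr f I p u ≤ 0}
      = {u | (∀ i, f i u ≤ 0) ∧ ∀ i ∈ I, f i u = 0} := by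
  ext u
  constructor
  · intro h
    refine ⟨fun i => by simpa [extConstr] using h (i, true), fun i hi => ?_⟩
    have h1 := h (i, true)
    have h2 := h (i, false)
    simp [extConstr] at h1
    simp [extConstr, hi] at h2
    linarith
  · rintro ⟨h1, h2⟩ p
    rcases p with ⟨i, b⟩
    cases b
    · simp only [extConstr, Bool.false_eq_true, if_false]
      split_ifs with hi
      · rw [LinearMap.neg_apply, h2 i hi]
        simp
      · simp
    · simpa [extConstr] using h1 i

end FaceLemmas

/-- Lemma 12: for a (nonempty) polyhedron `Λ`, the collection
of recession cones of faces of `Λ` coincides with the collection of faces of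
`rec(Λ)`; in particular it is a conic polyhedral complex. -/
theorem statement5 {n : ℕ} (Λ : Set (Fin n → ℝ)) (h : IsPolyhedron Λ)
    (hne : Λ.Nonempty) :
    {C | ∃ F, IsFaceOf F Λ ∧ C = recPoly F} = {C | IsFaceOf C (recPoly Λ)} ∧
    IsConicPolyComplex {C | ∃ F, IsFaceOf F Λ ∧ C = recPoly F} := by
  classical
  obtain ⟨m, f, b, rfl⟩ := h
  set Λ : Set (Fin n → ℝ) := {u | ∀ i, f i u ≤ b i} with hΛdef
  set K : Set (Fin n → ℝ) := {u | ∀ i, f i u ≤ 0} with hKdef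
  have hrec : recPoly Λ = K := rec_eq f b hne
  -- the cones `C_I`
  set CI : Finset (Fin m) → Set (Fin n → ℝ) :=
    fun I => {u | (∀ i, f i u ≤ 0) ∧ ∀ i ∈ I, f i u = 0} with hCIdef
  have hCIK : CI ∅ = K := by
    ext u
    simp [hCIdef, hKdef]
  -- characterization of the faces of `K`
  have char1 : ∀ C : Set (Fin n → ℝ), IsFaceOf C K → ∃ I : Finset (Fin m), C = CI I := by
    rintro C ⟨hCne, x, rfl⟩
    rw [hKdef] at hCne ⊢
    exact face_of_cone_eq f x hCne
  have char2 : ∀ I : Finset (Fin m), IsFaceOf (CI I) K := by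
    intro I
    have h := common_face f (∅ : Finset (Fin m)) I
    rwa [Finset.empty_union, show {u : Fin n → ℝ | (∀ i, f i u ≤ 0) ∧
      ∀ i ∈ (∅ : Finset (Fin m)), f i u = 0} = K from hCIK] at h
  -- Part 1
  have part1 : {C | ∃ F, IsFaceOf F Λ ∧ C = recPoly F} = {C | IsFaceOf C (recPoly Λ)} := by
    rw [hrec]
    ext C
    simp only [Set.mem_setOf_eq]
    constructor
    · rintro ⟨F, ⟨⟨p₀, hp₀⟩, x, rfl⟩, rfl⟩
      have h1 := rec_face f b x hp₀
      refine ⟨⟨0, ?_⟩, x, ?_⟩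
      · rw [h1]
        exact ⟨fun i => by simp, by simp⟩
      · rw [h1, hKdef, faceSet_cone_eq f x (face_nonneg f b x hp₀)]
    · rintro ⟨hCne, x, rfl⟩
      have hxK : ∀ u, (∀ i, f i u ≤ 0) → 0 ≤ x u := by
        obtain ⟨c0, hc0⟩ := hCne
        intro u hu
        have h1 : c0 + u ∈ K := by
          intro i
          have h2 := hc0.1 i
          have h3 := hu i
          show f i (c0 + u) ≤ 0
          rw [map_add]
          exact add_nonpos h2 h3
        have := hc0.2 (c0 + u) h1
        rw [map_add] at this
        linarith
      obtain ⟨p₀, hΛ0⟩ := hne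
      obtain ⟨p, hp, hpmin⟩ := min_exists n (Fin n → ℝ)
        (le_of_eq (Module.finrank_fin_fun ℝ)) m f b x p₀ hΛ0 hxK
      have hpF : p ∈ faceSet Λ x := ⟨hp, fun v hv => hpmin v hv⟩
      refine ⟨faceSet Λ x, ⟨⟨p, hpF⟩, x, rfl⟩, ?_⟩
      rw [rec_face f b x hpF, hKdef, faceSet_cone_eq f x (face_nonneg f b x hpF)]
  refine ⟨part1, ?_⟩
  rw [part1, hrec]
  -- Part 2: the faces of `K` form a conic polyhedral complex
  have hmem_iff : ∀ C : Set (Fin n → ℝ),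
      C ∈ {C | IsFaceOf C K} ↔ ∃ I : Finset (Fin m), C = CI I := by
    intro C
    exact ⟨char1 C, fun ⟨I, hI⟩ => hI ▸ char2 I⟩
  -- faces of `C_I` are again of the form `C_{I'}`
  have hface_of_CI : ∀ (I : Finset (Fin m)) (F : Set (Fin n → ℝ)),
      IsFaceOf F (CI I) → ∃ I' : Finset (Fin m), F = CI I' := by
    rintro I F ⟨hFne, x, rfl⟩
    have hCIext : CI I = {u | ∀ p, extConstr f I p u ≤ 0} := (extConstr_set f I).symm
    rw [hCIext] at hFne ⊢
    obtain ⟨J, hJ⟩ := face_of_cone_eq (extConstr f I) x hFne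
    refine ⟨I ∪ (J.filter fun p => p.2 = true).image Prod.fst, ?_⟩
    rw [hJ]
    ext u
    constructor
    · rintro ⟨hu1, hu2⟩
      have huCI : u ∈ CI I := by
        rw [hCIext]; exact hu1
      refine ⟨huCI.1, fun i hi => ?_⟩
      rcases Finset.mem_union.mp hi with hi | hi
      · exact huCI.2 i hi
      · obtain ⟨p, hp, rfl⟩ := Finset.mem_image.mp hi
        obtain ⟨hpJ, hp2⟩ := Finset.mem_filter.mp hp
        have := hu2 p hpJ
        rwa [show extConstr f I p = f p.1 by simp [extConstr, hp2]] at this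
    · rintro ⟨huK, huIJ⟩
      have huCI : u ∈ CI I :=
        ⟨huK, fun i hi => huIJ i (Finset.mem_union_left _ hi)⟩
      have hmemext : u ∈ {u : Fin n → ℝ | ∀ p, extConstr f I p u ≤ 0} := by
        rw [extConstr_set f I]
        exact huCI
      refine ⟨hmemext, fun p hp => ?_⟩
      rcases p with ⟨i, bb⟩
      cases bb
      · simp only [extConstr, Bool.false_eq_true, if_false]
        split_ifs with hi
        · rw [LinearMap.neg_apply, huCI.2 i hi, neg_zero]
        · rfl
      · simp only [extConstr, if_pos rfl]
        exact huIJ i (Finset.mem_union_right _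
          (Finset.mem_image.mpr ⟨(i, true), Finset.mem_filter.mpr ⟨hp, rfl⟩, rfl⟩))
  constructor
  constructor
  · -- nonempty
    exact ⟨K, (hmem_iff K).mpr ⟨∅, hCIK.symm⟩⟩
  refine ⟨?_, ?_, ?_, ?_⟩
  · -- finite
    apply Set.Finite.subset (Set.finite_range CI)
    intro C hC
    obtain ⟨I, hI⟩ := (hmem_iff C).mp hC
    exact ⟨I, hI.symm⟩
  · -- polyhedron and nonempty
    intro S hS
    obtain ⟨I, rfl⟩ := (hmem_iff S).mp hS
    constructor
    · have hpoly : IsPolyhedron {u : Fin n → ℝ | ∀ p, extConstr f I p u ≤ 0} := by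
        refine ⟨Fintype.card (Fin m × Bool),
          fun k => extConstr f I ((Fintype.equivFin (Fin m × Bool)).symm k),
          fun _ => 0, ?_⟩
        ext u
        constructor
        · intro hu k
          exact hu _
        · intro hu p
          have := hu ((Fintype.equivFin (Fin m × Bool)) p)
          simpa using this
      rwa [extConstr_set f I] at hpoly
    · exact ⟨0, fun i => by simp, fun i _ => by simp⟩
  · -- closed under faces
    intro S hS F hF
    obtain ⟨I, rfl⟩ := (hmem_iff S).mp hS
    obtain ⟨I', rfl⟩ := hface_of_CI I F hF
    exact (hmem_iff _).mpr ⟨I', rfl⟩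
  · -- intersections are common faces
    intro S hS T hT hST
    obtain ⟨I, rfl⟩ := (hmem_iff S).mp hS
    obtain ⟨J, rfl⟩ := (hmem_iff T).mp hT
    have hinter : CI I ∩ CI J = CI (I ∪ J) := by
      ext u
      simp only [hCIdef, Set.mem_inter_iff, Set.mem_setOf_eq, Finset.mem_union]
      constructor
      · rintro ⟨⟨h1, h2⟩, ⟨h3, h4⟩⟩
        exact ⟨h1, fun i hi => hi.elim (h2 i) (h4 i)⟩
      · rintro ⟨h1, h2⟩
        exact ⟨⟨h1, fun i hi => h2 i (Or.inl hi)⟩, ⟨h1, fun i hi => h2 i (Or.inr hi)⟩⟩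
    rw [hinter]
    constructor
    · exact common_face f I J
    · have h := common_face f J I
      rwa [Finset.union_comm J I] at h
  · -- every member is a polyhedral cone
    intro S hS
    obtain ⟨I, rfl⟩ := (hmem_iff S).mp hS
    have hcone := hcone_isPolyhedralCone (extConstr f I)
    rwa [extConstr_set f I] at hcone
end

section
/- Let Λ ⊆ ℝⁿ be a polyhedron and v ∈ rec(Λ). Then there exists a face F of Λ such that v lies in the relative interior of rec(F). Moreover, if F₁ and F₂ are two faces of Λ such that v lies in the relative interior of rec(F₁) and in the relative interior of rec(F₂), then rec(F₁) = rec(F₂). -/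
open Set Pointwise

variable {E : Type*} [NormedAddCommGroup E] [NormedSpace ℝ E]

section Aux

/-- LP attainment: a linear functional bounded above on a nonempty polyhedron
(with inequality and equality constraints) attains its maximum. -/
theorem s7_lp_attain (m : ℕ) : ∀ {k : ℕ} (f : Fin m → E →ₗ[ℝ] ℝ) (b : Fin m → ℝ)
    (h : Fin k → E →ₗ[ℝ] ℝ) (c : Fin k → ℝ) (g : E →ₗ[ℝ] ℝ),
    (∃ x, (∀ i, f i x ≤ b i) ∧ (∀ j, h j x = c j)) →
    (∃ B, ∀ x, (∀ i, f i x ≤ b i) → (∀ j, h j x = c j) → g x ≤ B) →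
    ∃ p, ((∀ i, f i p ≤ b i) ∧ (∀ j, h j p = c j)) ∧
      ∀ q, (∀ i, f i q ≤ b i) → (∀ j, h j q = c j) → g q ≤ g p := by
  induction m with
  | zero =>
    rintro k f b h c g ⟨p₀, -, hp₀⟩ ⟨B, hB⟩
    refine ⟨p₀, ⟨fun i => i.elim0, hp₀⟩, ?_⟩
    intro q hq1 hq2
    by_contra hgt
    push_neg at hgt
    have hd : 0 < g q - g p₀ := sub_pos.2 hgt
    set t : ℝ := (B - g p₀) / (g q - g p₀) + 1 with hts
    have hz2 : ∀ j, h j (p₀ + t • (q - p₀)) = c j := by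
      intro j; simp [map_add, map_smul, map_sub, hp₀ j, hq2 j]
    have hle := hB _ (fun i => i.elim0) hz2
    have hgz : g (p₀ + t • (q - p₀)) = g p₀ + t * (g q - g p₀) := by
      simp [map_add, map_smul, map_sub]
    have ht : t * (g q - g p₀) = (B - g p₀) + (g q - g p₀) := by
      rw [hts, add_mul, one_mul, div_mul_cancel₀ _ hd.ne']
    rw [hgz, ht] at hle
    linarith
  | succ m ih =>
    rintro k f b h c g ⟨q₀, hq₀1, hq₀2⟩ ⟨B, hB⟩
    set f' : Fin m → E →ₗ[ℝ] ℝ := fun i => f i.castSucc with hf'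
    set b' : Fin m → ℝ := fun i => b i.castSucc with hb'
    set fl := f (Fin.last m) with hfl
    set bl := b (Fin.last m) with hbl
    have main : (∃ p, ((∀ i, f i p ≤ b i) ∧ (∀ j, h j p = c j)) ∧
        ∀ q, (∀ i, f i q ≤ b i) → (∀ j, h j q = c j) → g q ≤ g p) ∨
        ∃ P, (∀ i, f' i P ≤ b' i) ∧ (∀ j, h j P = c j) ∧ bl < fl P ∧
          ∀ q, (∀ i, f i q ≤ b i) → (∀ j, h j q = c j) → g q ≤ g P := by
      by_cases hbd' : ∃ B', ∀ x, (∀ i, f' i x ≤ b' i) → (∀ j, h j x = c j) → g x ≤ B'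
      · obtain ⟨p', ⟨hp'1, hp'2⟩, hp'max⟩ :=
          ih f' b' h c g ⟨q₀, fun i => hq₀1 _, hq₀2⟩ hbd'
        by_cases hpl : fl p' ≤ bl
        · left
          refine ⟨p', ⟨?_, hp'2⟩, fun q hq1 hq2 => hp'max q (fun i => hq1 _) hq2⟩
          intro i
          refine Fin.lastCases ?_ ?_ i
          · exact hpl
          · exact fun i => hp'1 i
        · right
          exact ⟨p', hp'1, hp'2, lt_of_not_ge hpl,
            fun q hq1 hq2 => hp'max q (fun i => hq1 _) hq2⟩
      · push_neg at hbd'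
        obtain ⟨P, hP1, hP2, hPB⟩ := hbd' B
        right
        refine ⟨P, hP1, hP2, ?_, fun q hq1 hq2 => le_trans (hB q hq1 hq2) hPB.le⟩
        by_contra hl
        push_neg at hl
        have : g P ≤ B := hB P (fun i => Fin.lastCases hl (fun i => hP1 i) i) hP2
        linarith
    rcases main with hdone | ⟨P, hP1, hP2, hPl, hPmax⟩
    · exact hdone
    have hr : ∀ q, (∀ i, f i q ≤ b i) → (∀ j, h j q = c j) →
        ∃ r, (∀ i, f' i r ≤ b' i) ∧ (∀ j, h j r = c j) ∧ fl r = bl ∧ g q ≤ g r := by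
      intro q hq1 hq2
      rcases eq_or_lt_of_le (hq1 (Fin.last m) : fl q ≤ bl) with heq | hlt
      · exact ⟨q, fun i => hq1 _, hq2, heq, le_refl _⟩
      · have hden : 0 < fl P - fl q := by linarith
        set t : ℝ := (bl - fl q) / (fl P - fl q) with hts
        have ht0 : 0 < t := div_pos (by linarith) hden
        have ht1 : t ≤ 1 := by rw [hts, div_le_one hden]; linarith
        have htmul : t * (fl P - fl q) = bl - fl q := by
          rw [hts, div_mul_cancel₀ _ hden.ne']
        refine ⟨q + t • (P - q), ?_, ?_, ?_, ?_⟩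
        · intro i
          have h1 : f' i q ≤ b' i := hq1 i.castSucc
          have h2 : f' i P ≤ b' i := hP1 i
          have hexp : f' i (q + t • (P - q)) = (1 - t) * f' i q + t * f' i P := by
            simp [map_add, map_smul, map_sub]; ring
          rw [hexp]
          nlinarith
        · intro j; simp [map_add, map_smul, map_sub, hq2 j, hP2 j]
        · have hexp : fl (q + t • (P - q)) = fl q + t * (fl P - fl q) := by
            simp [map_add, map_smul, map_sub]
          rw [hexp, htmul]; ring
        · have hgq : g q ≤ g P := hPmax q hq1 hq2
          have hexp : g (q + t • (P - q)) = g q + t * (g P - g q) := by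
            simp [map_add, map_smul, map_sub]
          rw [hexp]
          nlinarith
    set h' : Fin (k + 1) → E →ₗ[ℝ] ℝ := Fin.snoc h fl with hh'
    set c' : Fin (k + 1) → ℝ := Fin.snoc c bl with hc'
    have mem'' : ∀ x, (∀ j, h j x = c j) → fl x = bl → ∀ j : Fin (k + 1), h' j x = c' j := by
      intro x hx hxl j
      refine Fin.lastCases ?_ ?_ j
      · simpa [hh', hc'] using hxl
      · intro j; simpa [hh', hc'] using hx j
    have hsub : ∀ x, (∀ i, f' i x ≤ b' i) → (∀ j, h' j x = c' j) →
        (∀ i, f i x ≤ b i) ∧ (∀ j, h j x = c j) := by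
      intro x hx1 hx2
      have hxl : fl x = bl := by simpa [hh', hc'] using hx2 (Fin.last k)
      constructor
      · intro i
        refine Fin.lastCases (le_of_eq hxl) (fun i => hx1 i) i
      · intro j
        simpa [hh', hc'] using hx2 j.castSucc
    obtain ⟨r₀, hr₀1, hr₀2, hr₀3, hr₀4⟩ := hr q₀ hq₀1 hq₀2
    obtain ⟨p'', ⟨hp1, hp2⟩, hpmax⟩ := ih f' b' h' c' g
      ⟨r₀, hr₀1, mem'' r₀ hr₀2 hr₀3⟩
      ⟨B, fun x hx1 hx2 => hB x (hsub x hx1 hx2).1 (hsub x hx1 hx2).2⟩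
    obtain ⟨hp1', hp2'⟩ := hsub p'' hp1 hp2
    refine ⟨p'', ⟨hp1', hp2'⟩, ?_⟩
    intro q hq1 hq2
    obtain ⟨r, hr1, hr2, hr3, hr4⟩ := hr q hq1 hq2
    exact le_trans hr4 (hpmax r hr1 (mem'' r hr2 hr3))

/-- The recession cone of a nonempty intersection of halfspaces. -/
theorem s7_recPoly_halfspaces {ι : Type*} (f : ι → E →ₗ[ℝ] ℝ) (b : ι → ℝ) {S : Set E}
    (hS : S = {x | ∀ i, f i x ≤ b i}) (hne : S.Nonempty) :
    recPoly S = {u | ∀ i, f i u ≤ 0} := by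
  ext u
  constructor
  · intro hu i
    obtain ⟨p₀, hp₀⟩ := hne
    have hiter : ∀ kk : ℕ, p₀ + kk • u ∈ S := by
      intro kk
      induction kk with
      | zero => simpa using hp₀
      | succ kk ihk =>
        rw [succ_nsmul, ← add_assoc]
        exact hu _ ihk
    by_contra hpos
    push_neg at hpos
    obtain ⟨kk, hkk⟩ := exists_nat_gt ((b i - f i p₀) / f i u)
    have hmem := hiter kk
    rw [hS] at hmem
    have hle := hmem i
    rw [map_add, map_nsmul, nsmul_eq_mul] at hle
    have hks : b i - f i p₀ < (kk : ℝ) * f i u := (div_lt_iff₀ hpos).1 hkk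
    linarith
  · intro hu x hx
    rw [hS] at hx ⊢
    intro i
    rw [map_add]
    linarith [hx i, hu i]

/-- Membership in the intrinsic interior via an open set. -/
theorem s7_mem_relint {s U : Set E} {v : E} (hU : IsOpen U) (hvU : v ∈ U) (hvs : v ∈ s)
    (hsub : ∀ w ∈ U, w ∈ affineSpan ℝ s → w ∈ s) : v ∈ intrinsicInterior ℝ s := by
  refine mem_intrinsicInterior.2 ⟨⟨v, subset_affineSpan ℝ s hvs⟩, ?_, rfl⟩
  have hopen : IsOpen ((↑) ⁻¹' U : Set (affineSpan ℝ s)) :=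
    hU.preimage continuous_subtype_val
  have hss : ((↑) ⁻¹' U : Set (affineSpan ℝ s)) ⊆ ((↑) ⁻¹' s) := fun z hz => hsub _ hz z.2
  exact interior_maximal hss hopen hvU

/-- From a point of the intrinsic interior, one can move slightly past it away
from any point of the set. -/
theorem s7_relint_line {s : Set E} {v u : E} (hv : v ∈ intrinsicInterior ℝ s) (hu : u ∈ s) :
    ∃ t : ℝ, 0 < t ∧ v + t • (v - u) ∈ s := by
  obtain ⟨y, hy, hyv⟩ := mem_intrinsicInterior.1 hv
  have hvspan : v ∈ affineSpan ℝ s := hyv ▸ y.2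
  have huspan : u ∈ affineSpan ℝ s := subset_affineSpan ℝ s hu
  have hmem : ∀ t : ℝ, v + t • (v - u) ∈ affineSpan ℝ s := by
    intro t
    have := AffineSubspace.smul_vsub_vadd_mem (affineSpan ℝ s) t hvspan huspan hvspan
    simpa [vsub_eq_sub, vadd_eq_add, add_comm] using this
  set γ : ℝ → affineSpan ℝ s := fun t => ⟨v + t • (v - u), hmem t⟩ with hγ
  have hcont : Continuous γ := by
    apply Continuous.subtype_mk
    exact continuous_const.add (continuous_id.smul continuous_const)
  have hγ0 : γ 0 = y := Subtype.ext (by simp [hγ, hyv])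
  have hnhds : γ ⁻¹' interior ((↑) ⁻¹' s : Set (affineSpan ℝ s)) ∈ nhds (0 : ℝ) :=
    hcont.continuousAt.preimage_mem_nhds (isOpen_interior.mem_nhds (hγ0 ▸ hy))
  obtain ⟨ε, hε, hball⟩ := Metric.mem_nhds_iff.1 hnhds
  refine ⟨ε / 2, by linarith, ?_⟩
  have hmemball : (ε / 2 : ℝ) ∈ Metric.ball (0 : ℝ) ε := by
    simp only [Metric.mem_ball, Real.dist_eq, sub_zero]
    rw [abs_of_pos (by linarith)]
    linarith
  have := interior_subset (hball hmemball)
  exact this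

/-- The recession cone of a (nonempty) face of a polyhedron. -/
theorem s7_rec_faceSet {m : ℕ} (f : Fin m → E →ₗ[ℝ] ℝ) (b : Fin m → ℝ) {Λ : Set E}
    (hΛ : Λ = {x | ∀ i, f i x ≤ b i}) (x : E →ₗ[ℝ] ℝ) {p₀ : E} (hp₀ : p₀ ∈ faceSet Λ x) :
    recPoly (faceSet Λ x) = {u | (∀ i, f i u ≤ 0) ∧ x u = 0} := by
  obtain ⟨hp₀Λ, hp₀min⟩ := hp₀
  set f' : Option (Fin m) → E →ₗ[ℝ] ℝ := fun o => o.elim x f with hf'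
  set b' : Option (Fin m) → ℝ := fun o => o.elim (x p₀) b with hb'
  have hF : faceSet Λ x = {p | ∀ o, f' o p ≤ b' o} := by
    ext p
    constructor
    · rintro ⟨hpΛ, hpmin⟩ o
      cases o with
      | none => exact hpmin p₀ hp₀Λ
      | some i =>
        rw [hΛ] at hpΛ
        exact hpΛ i
    · intro hp
      have hpΛ : p ∈ Λ := by rw [hΛ]; exact fun i => hp (some i)
      exact ⟨hpΛ, fun q hq => le_trans (hp none) (hp₀min q hq)⟩
  have hrec := s7_recPoly_halfspaces f' b' hF ⟨p₀, ⟨hp₀Λ, hp₀min⟩⟩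
  rw [hrec]
  ext u
  constructor
  · intro hu
    have h1 : ∀ i, f i u ≤ 0 := fun i => hu (some i)
    have h2 : x u ≤ 0 := hu none
    have h3 : 0 ≤ x u := by
      have hmem : p₀ + u ∈ Λ := by
        rw [hΛ]
        intro i
        rw [map_add]
        have hpi : f i p₀ ≤ b i := by rw [hΛ] at hp₀Λ; exact hp₀Λ i
        linarith [h1 i]
      have := hp₀min _ hmem
      rw [map_add] at this
      linarith
    exact ⟨h1, le_antisymm h2 h3⟩
  · rintro ⟨h1, h2⟩ o
    cases o with
    | none => exact le_of_eq h2
    | some i => exact h1 i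

end Aux

/-- Lemma 16: for a (nonempty) polyhedron `Λ` and
`v ∈ rec(Λ)`, there is a face `F` of `Λ` with `v` in the relative interior of
`rec(F)`; moreover any two such faces have the same recession cone. -/
theorem statement7 {n : ℕ} (Λ : Set (Fin n → ℝ)) (h : IsPolyhedron Λ)
    (hne : Λ.Nonempty) (v : Fin n → ℝ) (hv : v ∈ recPoly Λ) :
    (∃ F, IsFaceOf F Λ ∧ v ∈ intrinsicInterior ℝ (recPoly F)) ∧
    ∀ F₁ F₂ : Set (Fin n → ℝ), IsFaceOf F₁ Λ → IsFaceOf F₂ Λ →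
      v ∈ intrinsicInterior ℝ (recPoly F₁) →
      v ∈ intrinsicInterior ℝ (recPoly F₂) →
      recPoly F₁ = recPoly F₂ := by
  classical
  obtain ⟨m, f, b, hΛ⟩ := h
  have hC : recPoly Λ = {u | ∀ i, f i u ≤ 0} := s7_recPoly_halfspaces f b hΛ hne
  have hvC : ∀ i, f i v ≤ 0 := by rw [hC] at hv; exact hv
  constructor
  · -- existence
    set I : Finset (Fin m) := Finset.univ.filter (fun i => f i v = 0) with hI
    set g : (Fin n → ℝ) →ₗ[ℝ] ℝ := ∑ i ∈ I, f i with hg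
    have hgapp : ∀ u, g u = ∑ i ∈ I, f i u := by
      intro u; rw [hg, LinearMap.sum_apply]
    obtain ⟨q₀, hq₀⟩ := hne
    rw [hΛ] at hq₀
    obtain ⟨p, ⟨hp1, -⟩, hpmax⟩ := s7_lp_attain m f b Fin.elim0 Fin.elim0 g
      ⟨q₀, hq₀, fun j => j.elim0⟩
      ⟨∑ i ∈ I, b i, fun q hq _ => by
        rw [hgapp]
        exact Finset.sum_le_sum fun i _ => hq i⟩
    have hpF : p ∈ faceSet Λ (-g) := by
      constructor
      · rw [hΛ]; exact hp1
      · intro q hq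
        rw [hΛ] at hq
        have := hpmax q hq fun j => j.elim0
        simp only [LinearMap.neg_apply]
        linarith
    have hrecF := s7_rec_faceSet f b hΛ (-g) hpF
    refine ⟨faceSet Λ (-g), ⟨⟨p, hpF⟩, -g, rfl⟩, ?_⟩
    rw [hrecF]
    have hzero : ∀ u, (∀ i, f i u ≤ 0) → ((-g) u = 0 ↔ ∀ i ∈ I, f i u = 0) := by
      intro u hu
      rw [LinearMap.neg_apply, neg_eq_zero, hgapp]
      exact Finset.sum_eq_zero_iff_of_nonpos fun i _ => hu i
    have hvD : v ∈ {u | (∀ i, f i u ≤ 0) ∧ (-g) u = 0} := by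
      refine ⟨hvC, (hzero v hvC).2 ?_⟩
      intro i hi
      exact (Finset.mem_filter.1 hi).2
    set J : Finset (Fin m) := Finset.univ.filter (fun i => f i v ≠ 0) with hJ
    set U : Set (Fin n → ℝ) := ⋂ j ∈ J, {u | f j u < 0} with hU
    have hUopen : IsOpen U := by
      rw [hU]
      refine isOpen_biInter_finset fun j _ => ?_
      exact isOpen_lt (f j).continuous_of_finiteDimensional continuous_const
    have hvU : v ∈ U := by
      rw [hU]
      refine Set.mem_iInter₂.2 fun j hj => ?_
      exact lt_of_le_of_ne (hvC j) ((Finset.mem_filter.1 hj).2)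
    refine s7_mem_relint hUopen hvU hvD ?_
    have hker : ∀ i ∈ I, ∀ w ∈ affineSpan ℝ {u | (∀ i, f i u ≤ 0) ∧ (-g) u = 0}, f i w = 0 := by
      intro i hi w hw
      have hDsub : {u | (∀ i, f i u ≤ 0) ∧ (-g) u = 0} ⊆
          ((LinearMap.ker (f i)).toAffineSubspace : Set (Fin n → ℝ)) := by
        intro u hu
        have : f i u = 0 := (hzero u hu.1).1 hu.2 i hi
        simpa [Submodule.mem_toAffineSubspace, LinearMap.mem_ker] using this
      have hle := (affineSpan_le (k := ℝ)).2 hDsub hw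
      simpa [Submodule.mem_toAffineSubspace, LinearMap.mem_ker] using hle
    intro w hwU hwspan
    have h1 : ∀ i, f i w ≤ 0 := by
      intro i
      by_cases hi : f i v = 0
      · exact le_of_eq (hker i (Finset.mem_filter.2 ⟨Finset.mem_univ _, hi⟩) w hwspan)
      · have : w ∈ {u | f i u < 0} := by
          rw [hU] at hwU
          exact Set.mem_iInter₂.1 hwU i (Finset.mem_filter.2 ⟨Finset.mem_univ _, hi⟩)
        exact this.le
    exact ⟨h1, (hzero w h1).2 fun i hi => hker i hi w hwspan⟩
  · -- uniqueness
    have key : ∀ F₁ F₂ : Set (Fin n → ℝ), IsFaceOf F₁ Λ → IsFaceOf F₂ Λ →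
        v ∈ intrinsicInterior ℝ (recPoly F₁) → v ∈ intrinsicInterior ℝ (recPoly F₂) →
        recPoly F₁ ⊆ recPoly F₂ := by
      rintro F₁ F₂ ⟨hne₁, x₁, rfl⟩ ⟨hne₂, x₂, rfl⟩ hv₁ hv₂
      obtain ⟨p₁, hp₁⟩ := hne₁
      obtain ⟨p₂, hp₂⟩ := hne₂
      rw [s7_rec_faceSet f b hΛ x₁ hp₁] at hv₁ ⊢
      rw [s7_rec_faceSet f b hΛ x₂ hp₂] at hv₂ ⊢
      obtain ⟨hp₂Λ, hp₂min⟩ := hp₂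
      have hnn : ∀ z, (∀ i, f i z ≤ 0) → 0 ≤ x₂ z := by
        intro z hz
        have hmem : p₂ + z ∈ Λ := by
          rw [hΛ]
          intro i
          rw [map_add]
          have hpi : f i p₂ ≤ b i := by rw [hΛ] at hp₂Λ; exact hp₂Λ i
          linarith [hz i]
        have := hp₂min _ hmem
        rw [map_add] at this
        linarith
      intro u hu
      obtain ⟨t, ht, hw⟩ := s7_relint_line hv₁ hu
      have hvD2 := intrinsicInterior_subset hv₂
      have hx2w : 0 ≤ x₂ (v + t • (v - u)) := hnn _ hw.1
      have hx2u : 0 ≤ x₂ u := hnn _ hu.1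
      have hexp : x₂ (v + t • (v - u)) = x₂ v + t * (x₂ v - x₂ u) := by
        simp [map_add, map_smul, map_sub]
      rw [hexp, hvD2.2] at hx2w
      refine ⟨hu.1, ?_⟩
      nlinarith
    intro F₁ F₂ h1 h2 hv1 hv2
    exact Set.Subset.antisymm (key F₁ F₂ h1 h2 hv1 hv2) (key F₂ F₁ h2 h1 hv2 hv1)
end

section
/- Let Π be a polyhedral complex in ℝⁿ whose support |Π| is a convex set. Then rec(Π) = {rec(Λ) | Λ ∈ Π} is a conic polyhedral complex and c(Π) = {c(Λ) | Λ ∈ Π} ∪ {rec(Λ) × {0} | Λ ∈ Π} is a conic polyhedral complex in ℝⁿ × ℝ_{≥0}. -/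
open Set Pointwise

variable {E : Type*} [NormedAddCommGroup E] [NormedSpace ℝ E]

/-- Intersection of finitely many halfspaces. -/
def Hset {m : ℕ} (f : Fin m → E →ₗ[ℝ] ℝ) (b : Fin m → ℝ) : Set E := {x | ∀ i, f i x ≤ b i}

/-- Cone generated by finitely many vectors (indexed). -/
def CGen {ι : Type*} [Fintype ι] (v : ι → E) : Set E :=
  {x | ∃ c : ι → ℝ, (∀ i, 0 ≤ c i) ∧ x = ∑ i, c i • v i}

namespace CGen

variable {ι : Type*} [Fintype ι] {v : ι → E}

theorem zero_mem : (0 : E) ∈ CGen v :=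
  ⟨0, fun _ => le_refl 0, by simp⟩

theorem add_mem {x y : E} (hx : x ∈ CGen v) (hy : y ∈ CGen v) : x + y ∈ CGen v := by
  obtain ⟨c, hc, rfl⟩ := hx
  obtain ⟨d, hd, rfl⟩ := hy
  exact ⟨c + d, fun i => add_nonneg (hc i) (hd i), by
    simp [add_smul, Finset.sum_add_distrib]⟩

theorem smul_mem {t : ℝ} (ht : 0 ≤ t) {x : E} (hx : x ∈ CGen v) : t • x ∈ CGen v := by
  obtain ⟨c, hc, rfl⟩ := hx
  exact ⟨t • c, fun i => mul_nonneg ht (hc i), by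
    simp [Finset.smul_sum, smul_smul]⟩

theorem gen_mem (i : ι) : v i ∈ CGen v := by
  classical
  refine ⟨fun j => if j = i then 1 else 0, fun j => by positivity, ?_⟩
  simp [ite_smul]

theorem sum_mem {κ : Type*} (s : Finset κ) (g : κ → E) (hg : ∀ j ∈ s, g j ∈ CGen v) :
    ∑ j ∈ s, g j ∈ CGen v :=
  Finset.sum_induction g (· ∈ CGen v) (fun _ _ => add_mem) zero_mem hg

end CGen

theorem CGen_reindex {ι κ : Type*} [Fintype ι] [Fintype κ] (e : κ ≃ ι) (v : ι → E) :
    CGen (v ∘ e) = CGen v := by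
  ext x
  constructor
  · rintro ⟨c, hc, rfl⟩
    refine ⟨c ∘ e.symm, fun i => hc _, ?_⟩
    rw [← Equiv.sum_comp e (fun i => (c ∘ e.symm) i • v i)]
    simp
  · rintro ⟨c, hc, rfl⟩
    refine ⟨c ∘ e, fun i => hc _, ?_⟩
    rw [← Equiv.sum_comp e (fun i => c i • v i)]
    simp

/-- Finitely generated cone predicate. -/
def FinGen (S : Set E) : Prop := ∃ (k : ℕ) (v : Fin k → E), S = CGen v

theorem finGen_of_CGen {ι : Type*} [Fintype ι] (v : ι → E) : FinGen (CGen v) :=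
  ⟨Fintype.card ι, v ∘ (Fintype.equivFin ι).symm, (CGen_reindex _ _).symm⟩

open Classical in
/-- Generators for the double-description step. -/
noncomputable def ddGens {ι : Type*} [Fintype ι] (v : ι → E) (g : E →ₗ[ℝ] ℝ) :
    ι ⊕ (ι × ι) → E := Sum.elim
  (fun i => if g (v i) ≤ 0 then v i else 0)
  (fun p => if g (v p.1) ≤ 0 ∧ 0 < g (v p.2) then g (v p.2) • v p.1 - g (v p.1) • v p.2 else 0)

/-- The key double description step. -/
theorem dd_step {ι : Type*} [Fintype ι] (v : ι → E) (g : E →ₗ[ℝ] ℝ) :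
    CGen v ∩ {x | g x ≤ 0} = CGen (ddGens v g) := by
  classical
  set w : ι ⊕ (ι × ι) → E := ddGens v g with hw0
  have hw : w = Sum.elim
      (fun i => if g (v i) ≤ 0 then v i else 0)
      (fun p => if g (v p.1) ≤ 0 ∧ 0 < g (v p.2) then
        g (v p.2) • v p.1 - g (v p.1) • v p.2 else 0) := by
    rw [hw0, ddGens]
  have hwmem : ∀ k, w k ∈ CGen v ∩ {x | g x ≤ 0} := by
    rintro (i | ⟨i, j⟩)
    · by_cases h : g (v i) ≤ 0
      · simp only [hw, Sum.elim_inl, if_pos h]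
        exact ⟨CGen.gen_mem i, h⟩
      · simp only [hw, Sum.elim_inl, if_neg h]
        exact ⟨CGen.zero_mem, by simp⟩
    · by_cases h : g (v i) ≤ 0 ∧ 0 < g (v j)
      · simp only [hw, Sum.elim_inr, if_pos h]
        constructor
        · have h1 : g (v j) • v i ∈ CGen v := CGen.smul_mem h.2.le (CGen.gen_mem i)
          have h2 : (-g (v i)) • v j ∈ CGen v := CGen.smul_mem (by linarith [h.1]) (CGen.gen_mem j)
          have he : g (v j) • v i - g (v i) • v j = g (v j) • v i + (-g (v i)) • v j := by
            rw [neg_smul]; abel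
          rw [he]; exact CGen.add_mem h1 h2
        · simp only [mem_setOf_eq, map_sub, map_smul, smul_eq_mul]
          have : g (v j) * g (v i) - g (v i) * g (v j) = 0 := by ring
          rw [this]
      · simp only [hw, Sum.elim_inr, if_neg h]
        exact ⟨CGen.zero_mem, by simp⟩
  apply Subset.antisymm
  · -- hard direction
    rintro x ⟨⟨c, hc, rfl⟩, hgx⟩
    simp only [mem_setOf_eq] at hgx
    suffices H : ∀ (N : ℕ) (c : ι → ℝ), (∀ i, 0 ≤ c i) →
        (Finset.univ.filter (fun i => c i ≠ 0 ∧ g (v i) ≠ 0)).card ≤ N →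
        g (∑ i, c i • v i) ≤ 0 → (∑ i, c i • v i) ∈ CGen w from H _ c hc le_rfl hgx
    intro N
    induction N with
    | zero =>
      intro c hc hcard hg0
      by_cases hJ : ∃ j, c j ≠ 0 ∧ 0 < g (v j)
      · obtain ⟨j, hj1, hj2⟩ := hJ
        exfalso
        have hjm : j ∈ Finset.univ.filter (fun i => c i ≠ 0 ∧ g (v i) ≠ 0) := by
          simp [hj1, ne_of_gt hj2]
        have := Finset.card_pos.mpr ⟨j, hjm⟩
        omega
      · push_neg at hJ
        refine ⟨Sum.elim (fun i => if g (v i) ≤ 0 then c i else 0) (fun _ => 0),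
          ?_, ?_⟩
        · rintro (i | p) <;> simp only [Sum.elim_inl, Sum.elim_inr]
          · split
            · exact hc i
            · exact le_refl 0
          · exact le_refl 0
        · rw [Fintype.sum_sum_type]
          simp only [Sum.elim_inl, Sum.elim_inr, zero_smul, Finset.sum_const_zero, add_zero]
          refine Finset.sum_congr rfl (fun i _ => ?_)
          by_cases h : g (v i) ≤ 0
          · simp only [hw, Sum.elim_inl, if_pos h]
          · have hci : c i = 0 := by
              by_contra hne
              exact h (hJ i hne)
            simp [hw, hci, h]
    | succ N ih =>
      intro c hc hcard hg0
      by_cases hJ : ∃ j, c j ≠ 0 ∧ 0 < g (v j)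
      · obtain ⟨j, hj1, hj2⟩ := hJ
        have hgsum : g (∑ i, c i • v i) = ∑ i, c i * g (v i) := by
          simp [map_sum]
        have hI : ∃ i0, c i0 ≠ 0 ∧ g (v i0) < 0 := by
          by_contra hno
          push_neg at hno
          have hpos : 0 < ∑ i, c i * g (v i) := by
            have h1 : ∀ i ∈ Finset.univ, 0 ≤ c i * g (v i) := by
              intro i _
              by_cases hci : c i = 0
              · simp [hci]
              · exact mul_nonneg (hc i) (hno i hci)
            exact Finset.sum_pos' h1
              ⟨j, Finset.mem_univ j, mul_pos ((hc j).lt_of_ne (Ne.symm hj1)) hj2⟩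
          rw [hgsum] at hg0
          linarith
        obtain ⟨i0, hi01, hi02⟩ := hI
        have hij : i0 ≠ j := fun h => by rw [h] at hi02; linarith
        set μ : ℝ := min (c i0 / g (v j)) (c j / (-g (v i0))) with hμ
        have hci0pos : 0 < c i0 := (hc i0).lt_of_ne (Ne.symm hi01)
        have hcjpos : 0 < c j := (hc j).lt_of_ne (Ne.symm hj1)
        have hμpos : 0 < μ := lt_min (div_pos hci0pos hj2) (div_pos hcjpos (by linarith))
        set c' : ι → ℝ := fun l => if l = i0 then c i0 - μ * g (v j)
          else if l = j then c j + μ * g (v i0) else c l with hc'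
        have hc'0 : ∀ l, 0 ≤ c' l := by
          intro l
          rw [hc']
          dsimp only
          split
          · have hle : μ ≤ c i0 / g (v j) := min_le_left _ _
            rw [le_div_iff₀ hj2] at hle
            linarith
          · split
            · have hle : μ ≤ c j / (-g (v i0)) := min_le_right _ _
              rw [le_div_iff₀ (by linarith)] at hle
              nlinarith
            · exact hc l
        set W : E := g (v j) • v i0 - g (v i0) • v j with hW
        have hWmem : μ • W ∈ CGen w := by
          have hWe : W = w (Sum.inr (i0, j)) := by
            simp [hw, hW, hi02.le, hj2]
          rw [hWe]
          exact CGen.smul_mem hμpos.le (CGen.gen_mem _)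
        have hgW : g W = 0 := by
          simp only [hW, map_sub, map_smul, smul_eq_mul]
          ring
        have hsplit : ∑ i, c i • v i = μ • W + ∑ l, c' l • v l := by
          have hd : ∀ l, c l • v l =
              ((if l = i0 then μ * g (v j) else 0) • v l
                + (if l = j then -(μ * g (v i0)) else 0) • v l) + c' l • v l := by
            intro l
            rw [hc']
            dsimp only
            by_cases h1 : l = i0
            · subst h1
              rw [if_pos rfl, if_neg hij, if_pos rfl]
              rw [← add_smul, ← add_smul]
              congr 1
              ring
            · by_cases h2 : l = j
              · subst h2
                rw [if_neg h1, if_pos rfl, if_neg h1, if_pos rfl]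
                rw [← add_smul, ← add_smul]
                congr 1
                ring
              · simp [h1, h2]
          calc ∑ i, c i • v i
              = ∑ l, (((if l = i0 then μ * g (v j) else 0) • v l
                + (if l = j then -(μ * g (v i0)) else 0) • v l) + c' l • v l) :=
                Finset.sum_congr rfl (fun l _ => hd l)
            _ = ((∑ l, (if l = i0 then μ * g (v j) else 0) • v l)
                + (∑ l, (if l = j then -(μ * g (v i0)) else 0) • v l))
                + ∑ l, c' l • v l := by
                rw [← Finset.sum_add_distrib, ← Finset.sum_add_distrib]
            _ = ((μ * g (v j)) • v i0 + (-(μ * g (v i0))) • v j) + ∑ l, c' l • v l := by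
                have e1 : ∑ l, (if l = i0 then μ * g (v j) else 0) • v l
                    = (μ * g (v j)) • v i0 := by
                  simp only [ite_smul, zero_smul]
                  rw [Finset.sum_ite_eq' Finset.univ i0 (fun l => (μ * g (v j)) • v l)]
                  simp
                have e2 : ∑ l, (if l = j then -(μ * g (v i0)) else 0) • v l
                    = (-(μ * g (v i0))) • v j := by
                  simp only [ite_smul, zero_smul]
                  rw [Finset.sum_ite_eq' Finset.univ j (fun l => (-(μ * g (v i0))) • v l)]
                  simp
                rw [e1, e2]
            _ = μ • W + ∑ l, c' l • v l := by
                congr 1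
                rw [hW, smul_sub, smul_smul, smul_smul, neg_smul, sub_eq_add_neg]
        have hzero : c' i0 = 0 ∨ c' j = 0 := by
          rcases le_total (c i0 / g (v j)) (c j / (-g (v i0))) with hm | hm
          · left
            have hμe : μ = c i0 / g (v j) := min_eq_left hm
            rw [hc']
            dsimp only
            rw [if_pos rfl, hμe, div_mul_cancel₀ _ (ne_of_gt hj2), sub_self]
          · right
            have hμe : μ = c j / (-g (v i0)) := min_eq_right hm
            have hne : g (v i0) ≠ 0 := ne_of_lt hi02
            have h2 : c j / (-g (v i0)) * g (v i0) = -c j := by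
              rw [div_neg, neg_mul, div_mul_cancel₀ _ hne]
            rw [hc']
            dsimp only
            rw [if_neg (Ne.symm hij), if_pos rfl, hμe, h2]
            simp
        have hsubset : Finset.univ.filter (fun i => c' i ≠ 0 ∧ g (v i) ≠ 0) ⊂
            Finset.univ.filter (fun i => c i ≠ 0 ∧ g (v i) ≠ 0) := by
          constructor
          · intro l hl
            simp only [Finset.mem_filter, Finset.mem_univ, true_and] at hl ⊢
            refine ⟨?_, hl.2⟩
            rw [hc'] at hl
            dsimp only at hl
            by_cases h1 : l = i0
            · subst h1; exact hi01
            · by_cases h2 : l = j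
              · subst h2; exact hj1
              · rw [if_neg h1, if_neg h2] at hl; exact hl.1
          · intro hsub
            rcases hzero with h0 | h0
            · have hmem : i0 ∈ Finset.univ.filter (fun i => c i ≠ 0 ∧ g (v i) ≠ 0) := by
                simp [hi01, ne_of_lt hi02]
              have := hsub hmem
              simp only [Finset.mem_filter, Finset.mem_univ, true_and] at this
              exact this.1 h0
            · have hmem : j ∈ Finset.univ.filter (fun i => c i ≠ 0 ∧ g (v i) ≠ 0) := by
                simp [hj1, ne_of_gt hj2]
              have := hsub hmem
              simp only [Finset.mem_filter, Finset.mem_univ, true_and] at this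
              exact this.1 h0
        have hcard' : (Finset.univ.filter (fun i => c' i ≠ 0 ∧ g (v i) ≠ 0)).card ≤ N := by
          have := Finset.card_lt_card hsubset
          omega
        have hg' : g (∑ l, c' l • v l) ≤ 0 := by
          have heq : g (∑ i, c i • v i) = μ * g W + g (∑ l, c' l • v l) := by
            rw [hsplit]; simp
          rw [hgW] at heq
          simp only [mul_zero, zero_add] at heq
          rw [← heq]
          exact hg0
        have hx' := ih c' hc'0 hcard' hg'
        rw [hsplit]
        exact CGen.add_mem hWmem hx'
      · push_neg at hJ
        refine ⟨Sum.elim (fun i => if g (v i) ≤ 0 then c i else 0) (fun _ => 0),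
          ?_, ?_⟩
        · rintro (i | p) <;> simp only [Sum.elim_inl, Sum.elim_inr]
          · split
            · exact hc i
            · exact le_refl 0
          · exact le_refl 0
        · rw [Fintype.sum_sum_type]
          simp only [Sum.elim_inl, Sum.elim_inr, zero_smul, Finset.sum_const_zero, add_zero]
          refine Finset.sum_congr rfl (fun i _ => ?_)
          by_cases h : g (v i) ≤ 0
          · simp only [hw, Sum.elim_inl, if_pos h]
          · have hci : c i = 0 := by
              by_contra hne
              exact h (hJ i hne)
            simp [hw, hci, h]
  · rintro x ⟨c, hc, rfl⟩
    have hterm : ∀ k ∈ Finset.univ, c k • w k ∈ CGen v ∩ {x | g x ≤ 0} := by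
      intro k _
      obtain ⟨h1, h2⟩ := hwmem k
      refine ⟨CGen.smul_mem (hc k) h1, ?_⟩
      simp only [mem_setOf_eq] at h2 ⊢
      rw [map_smul, smul_eq_mul]
      exact mul_nonpos_of_nonneg_of_nonpos (hc k) h2
    constructor
    · exact CGen.sum_mem _ _ (fun k hk => (hterm k hk).1)
    · simp only [mem_setOf_eq, map_sum]
      apply Finset.sum_nonpos
      intro k _
      have := (hterm k (Finset.mem_univ k)).2
      simpa using this



/-- Minkowski–Weyl, H-to-V direction for cones. -/
theorem hset_zero_finGen [FiniteDimensional ℝ E] :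
    ∀ {m : ℕ} (f : Fin m → E →ₗ[ℝ] ℝ), FinGen (Hset f (0 : Fin m → ℝ)) := by
  intro m
  induction m with
  | zero =>
    intro f
    have huniv : Hset f (0 : Fin 0 → ℝ) = univ := by
      ext x
      simp only [Hset, mem_setOf_eq, mem_univ, iff_true]
      exact fun i => i.elim0
    set B := Module.finBasis ℝ E with hB
    have hgen : (univ : Set E) = CGen (Sum.elim (fun i => B i) (fun i => -(B i))) := by
      apply Subset.antisymm
      · intro x _
        refine ⟨Sum.elim (fun i => max (B.repr x i) 0) (fun i => max (-(B.repr x i)) 0),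
          ?_, ?_⟩
        · rintro (i | i) <;> simp only [Sum.elim_inl, Sum.elim_inr] <;> exact le_max_right _ _
        · rw [Fintype.sum_sum_type]
          simp only [Sum.elim_inl, Sum.elim_inr, smul_neg]
          rw [← Finset.sum_add_distrib]
          have hterm : ∀ i, max (B.repr x i) 0 • B i + -(max (-(B.repr x i)) 0 • B i)
              = (B.repr x i) • B i := by
            intro i
            rw [← neg_smul, ← add_smul]
            congr 1
            rw [← sub_eq_add_neg]
            exact max_zero_sub_max_neg_zero_eq_self _
          rw [Finset.sum_congr rfl (fun i _ => hterm i)]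
          exact (B.sum_repr x).symm
      · exact subset_univ _
    rw [huniv, hgen]
    exact finGen_of_CGen _
  | succ m ih =>
    intro f
    obtain ⟨k, v, hv⟩ := ih (fun i => f i.succ)
    have hsplit : Hset f (0 : Fin (m+1) → ℝ) = CGen v ∩ {x | f 0 x ≤ 0} := by
      ext x
      simp only [Hset, mem_setOf_eq, mem_inter_iff, Pi.zero_apply]
      rw [Fin.forall_fin_succ]
      constructor
      · rintro ⟨h0, hs⟩
        refine ⟨?_, h0⟩
        have : x ∈ Hset (fun i => f i.succ) (0 : Fin m → ℝ) := fun i => hs i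
        rw [hv] at this
        exact this
      · rintro ⟨hc, h0⟩
        refine ⟨h0, ?_⟩
        have : x ∈ Hset (fun i => f i.succ) (0 : Fin m → ℝ) := by
          rw [hv]; exact hc
        exact fun i => this i
    rw [hsplit, dd_step]
    exact finGen_of_CGen _

theorem FinGen.isPolyhedralCone {S : Set E} (h : FinGen S) : IsPolyhedralCone S := by
  classical
  obtain ⟨k, v, rfl⟩ := h
  refine ⟨Finset.image v Finset.univ, ?_⟩
  apply Subset.antisymm
  · rintro x ⟨c, hc, rfl⟩
    refine ⟨fun y => ∑ i ∈ Finset.univ.filter (fun i => v i = y), c i, ?_, ?_⟩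
    · intro y
      exact Finset.sum_nonneg (fun i _ => hc i)
    · symm
      apply Finset.sum_image'
      intro i _
      rw [Finset.sum_smul]
      exact Finset.sum_congr rfl (fun x hx => by rw [(Finset.mem_filter.mp hx).2])
  · rintro x ⟨c, hc, rfl⟩
    apply CGen.sum_mem
    intro y hy
    obtain ⟨i, _, rfl⟩ := Finset.mem_image.mp hy
    exact CGen.smul_mem (hc _) (CGen.gen_mem i)

/-- The H-cone `{x | ∀ i, f i x ≤ 0}` is a polyhedral cone. -/
theorem hset_zero_isPolyhedralCone [FiniteDimensional ℝ E] {m : ℕ} (f : Fin m → E →ₗ[ℝ] ℝ) :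
    IsPolyhedralCone (Hset f (0 : Fin m → ℝ)) :=
  (hset_zero_finGen f).isPolyhedralCone



theorem Hset_zero_add_mem {m : ℕ} {f : Fin m → E →ₗ[ℝ] ℝ} {x y : E}
    (hx : x ∈ Hset f 0) (hy : y ∈ Hset f 0) : x + y ∈ Hset f 0 := by
  intro i
  have h1 := hx i
  have h2 := hy i
  simp only [Pi.zero_apply] at h1 h2 ⊢
  have : f i (x + y) = f i x + f i y := by simp
  rw [this]
  linarith

theorem Hset_zero_smul_mem {m : ℕ} {f : Fin m → E →ₗ[ℝ] ℝ} {t : ℝ} (ht : 0 ≤ t) {x : E}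
    (hx : x ∈ Hset f 0) : t • x ∈ Hset f 0 := by
  intro i
  have h1 := hx i
  simp only [Pi.zero_apply] at h1 ⊢
  have : f i (t • x) = t * f i x := by simp
  rw [this]
  exact mul_nonpos_of_nonneg_of_nonpos ht h1

theorem zero_mem_hset_zero {m : ℕ} {f : Fin m → E →ₗ[ℝ] ℝ} : (0 : E) ∈ Hset f 0 := by
  intro i
  simp

theorem hset_ray {m : ℕ} {f : Fin m → E →ₗ[ℝ] ℝ} {b : Fin m → ℝ} {p u : E}
    (hp : p ∈ Hset f b) (hu : u ∈ Hset f 0) {t : ℝ} (ht : 0 ≤ t) :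
    p + t • u ∈ Hset f b := by
  intro i
  have h1 := hp i
  have h2 := hu i
  simp only [Pi.zero_apply] at h2
  have : f i (p + t • u) = f i p + t * f i u := by simp
  rw [this]
  nlinarith

theorem recPoly_hset {m : ℕ} {f : Fin m → E →ₗ[ℝ] ℝ} {b : Fin m → ℝ}
    (hne : (Hset f b).Nonempty) : recPoly (Hset f b) = Hset f 0 := by
  ext u
  constructor
  · intro hu
    obtain ⟨p, hp⟩ := hne
    have hiter : ∀ k : ℕ, p + (k : ℝ) • u ∈ Hset f b := by
      intro k
      induction k with
      | zero => simpa using hp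
      | succ k ih =>
        have h := hu _ ih
        have he : p + (k : ℝ) • u + u = p + ((k : ℕ) + 1 : ℝ) • u := by
          rw [add_smul, one_smul]; abel
        rw [he] at h
        push_cast
        exact h
    intro i
    simp only [Pi.zero_apply]
    by_contra hpos
    push_neg at hpos
    obtain ⟨k, hk⟩ := exists_nat_gt ((b i - f i p) / f i u)
    have hki := hiter k i
    have : f i (p + (k : ℝ) • u) = f i p + (k : ℝ) * f i u := by simp
    rw [this] at hki
    rw [div_lt_iff₀ hpos] at hk
    linarith
  · intro hu q hq
    have := hset_ray hq hu (t := 1) zero_le_one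
    simpa using this

theorem hset_rec_nonneg_of_bddBelow {m : ℕ} {f : Fin m → E →ₗ[ℝ] ℝ} {b : Fin m → ℝ}
    {p : E} (hp : p ∈ Hset f b) {x : E →ₗ[ℝ] ℝ} {M : ℝ}
    (hM : ∀ v ∈ Hset f b, M ≤ x v) :
    ∀ u ∈ Hset f (0 : Fin m → ℝ), 0 ≤ x u := by
  intro u hu
  by_contra h
  push_neg at h
  obtain ⟨k, hk⟩ := exists_nat_gt ((x p - M) / (-(x u)))
  have hmem := hset_ray hp hu (t := (k : ℝ)) (Nat.cast_nonneg k)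
  have := hM _ hmem
  have hxv : x (p + (k : ℝ) • u) = x p + (k : ℝ) * x u := by simp
  rw [hxv] at this
  rw [div_lt_iff₀ (by linarith)] at hk
  linarith

theorem hset_closed [FiniteDimensional ℝ E] {m : ℕ} (f : Fin m → E →ₗ[ℝ] ℝ) (b : Fin m → ℝ) :
    IsClosed (Hset f b) := by
  have he : Hset f b = ⋂ i, (f i) ⁻¹' Iic (b i) := by
    ext u
    simp [Hset, mem_iInter, mem_preimage]
  rw [he]
  exact isClosed_iInter (fun i => (isClosed_Iic).preimage (f i).continuous_of_finiteDimensional)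

theorem hset_convex {m : ℕ} (f : Fin m → E →ₗ[ℝ] ℝ) (b : Fin m → ℝ) :
    Convex ℝ (Hset f b) := by
  intro u hu v hv a c ha hc hac
  intro i
  have h1 := hu i
  have h2 := hv i
  have : f i (a • u + c • v) = a * f i u + c * f i v := by simp
  rw [this]
  have h3 : a * b i + c * b i = b i := by rw [← add_mul, hac, one_mul]
  nlinarith [mul_le_mul_of_nonneg_left h1 ha, mul_le_mul_of_nonneg_left h2 hc]

theorem faceSet_subset (S : Set E) (x : E →ₗ[ℝ] ℝ) : faceSet S x ⊆ S := fun _ hu => hu.1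

theorem faceSet_eq_inter {S : Set E} {x : E →ₗ[ℝ] ℝ} {u0 : E} (h : u0 ∈ faceSet S x) :
    faceSet S x = S ∩ {u | x u ≤ x u0} := by
  ext u
  constructor
  · intro hu
    exact ⟨hu.1, hu.2 u0 h.1⟩
  · rintro ⟨h1, h2⟩
    exact ⟨h1, fun v hv => le_trans h2 (h.2 v hv)⟩

theorem hset_inter_halfspace {m : ℕ} (f : Fin m → E →ₗ[ℝ] ℝ) (b : Fin m → ℝ)
    (x : E →ₗ[ℝ] ℝ) (β : ℝ) :
    Hset f b ∩ {u | x u ≤ β} = Hset (Fin.snoc f x) (Fin.snoc b β) := by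
  ext u
  simp only [Hset, mem_inter_iff, mem_setOf_eq]
  rw [Fin.forall_fin_succ']
  constructor
  · rintro ⟨h1, h2⟩
    refine ⟨fun i => ?_, ?_⟩
    · simpa [Fin.snoc_castSucc] using h1 i
    · simpa [Fin.snoc_last] using h2
  · rintro ⟨h1, h2⟩
    refine ⟨fun i => ?_, ?_⟩
    · simpa [Fin.snoc_castSucc] using h1 i
    · simpa [Fin.snoc_last] using h2

theorem hset_zero_inter_halfspace {m : ℕ} (f : Fin m → E →ₗ[ℝ] ℝ) (x : E →ₗ[ℝ] ℝ) :
    Hset f 0 ∩ {u | x u ≤ 0} = Hset (Fin.snoc f x) (0 : Fin (m+1) → ℝ) := by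
  have h := hset_inter_halfspace f 0 x 0
  have hb : (Fin.snoc (0 : Fin m → ℝ) (0:ℝ)) = (0 : Fin (m+1) → ℝ) := by
    ext i
    induction i using Fin.lastCases <;> simp
  rw [h, hb]

theorem faceSet_hsetZero_nonneg {m : ℕ} {f : Fin m → E →ₗ[ℝ] ℝ} {x : E →ₗ[ℝ] ℝ}
    (hne : (faceSet (Hset f 0) x).Nonempty) :
    ∀ u ∈ Hset f (0 : Fin m → ℝ), 0 ≤ x u := by
  obtain ⟨u0, hu0⟩ := hne
  have h1 : x u0 ≤ 0 := by
    have := hu0.2 0 zero_mem_hset_zero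
    simpa using this
  have h2 : x u0 ≤ 2 * x u0 := by
    have := hu0.2 ((2:ℝ) • u0) (Hset_zero_smul_mem (by norm_num) hu0.1)
    simpa using this
  have h0 : x u0 = 0 := by linarith
  intro u hu
  have := hu0.2 u hu
  linarith

theorem faceSet_hsetZero_eq {m : ℕ} {f : Fin m → E →ₗ[ℝ] ℝ} {x : E →ₗ[ℝ] ℝ}
    (hx : ∀ u ∈ Hset f (0 : Fin m → ℝ), 0 ≤ x u) :
    faceSet (Hset f 0) x = Hset f 0 ∩ {u | x u ≤ 0} := by
  ext u
  constructor
  · intro hu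
    refine ⟨hu.1, ?_⟩
    have := hu.2 0 zero_mem_hset_zero
    simpa using this
  · rintro ⟨h1, h2⟩
    exact ⟨h1, fun v hv => le_trans h2 (hx v hv)⟩



/-- The linear maps cutting out the homogenization cone of `Hset f b` in `E × ℝ`. -/
noncomputable def hatMaps {m : ℕ} (f : Fin m → E →ₗ[ℝ] ℝ) (b : Fin m → ℝ) :
    Fin (m+1) → (E × ℝ) →ₗ[ℝ] ℝ :=
  Fin.snoc (fun i => (f i).comp (LinearMap.fst ℝ E ℝ) - b i • (LinearMap.snd ℝ E ℝ))
    (-(LinearMap.snd ℝ E ℝ))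

theorem mem_hatCone {m : ℕ} {f : Fin m → E →ₗ[ℝ] ℝ} {b : Fin m → ℝ} {y : E × ℝ} :
    y ∈ Hset (hatMaps f b) 0 ↔ (∀ i, f i y.1 ≤ y.2 * b i) ∧ 0 ≤ y.2 := by
  simp only [Hset, mem_setOf_eq]
  rw [Fin.forall_fin_succ']
  simp only [hatMaps, Fin.snoc_castSucc, Fin.snoc_last, LinearMap.sub_apply,
    LinearMap.coe_comp, Function.comp_apply, LinearMap.smul_apply, LinearMap.fst_apply,
    LinearMap.snd_apply, smul_eq_mul, Pi.zero_apply, LinearMap.neg_apply, neg_nonpos,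
    sub_nonpos]
  constructor
  · rintro ⟨h1, h2⟩
    exact ⟨fun i => by linarith [h1 i], h2⟩
  · rintro ⟨h1, h2⟩
    exact ⟨fun i => by linarith [h1 i], h2⟩

theorem mem_hat_one {m : ℕ} {f : Fin m → E →ₗ[ℝ] ℝ} {b : Fin m → ℝ} {u : E} :
    ((u, (1:ℝ)) ∈ Hset (hatMaps f b) 0) ↔ u ∈ Hset f b := by
  rw [mem_hatCone]
  constructor
  · rintro ⟨h, -⟩
    intro i
    simpa using h i
  · intro h
    exact ⟨fun i => by simpa using h i, zero_le_one⟩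

theorem mem_hat_zero {m : ℕ} {f : Fin m → E →ₗ[ℝ] ℝ} {b : Fin m → ℝ} {u : E} :
    ((u, (0:ℝ)) ∈ Hset (hatMaps f b) 0) ↔ u ∈ Hset f 0 := by
  rw [mem_hatCone]
  constructor
  · rintro ⟨h, -⟩
    intro i
    simpa using h i
  · intro h
    refine ⟨fun i => ?_, le_refl 0⟩
    have := h i
    simpa using this

/-- A linear functional nonnegative on the recession cone attains its minimum
on a nonempty polyhedron. -/
theorem hset_min_attained [FiniteDimensional ℝ E] {m : ℕ} {f : Fin m → E →ₗ[ℝ] ℝ}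
    {b : Fin m → ℝ} (hne : (Hset f b).Nonempty) {x : E →ₗ[ℝ] ℝ}
    (hx : ∀ u ∈ Hset f (0 : Fin m → ℝ), 0 ≤ x u) :
    ∃ p ∈ Hset f b, ∀ v ∈ Hset f b, x p ≤ x v := by
  classical
  obtain ⟨k, v, hv⟩ := hset_zero_finGen (hatMaps f b)
  have hvmem : ∀ j, v j ∈ Hset (hatMaps f b) 0 := by
    intro j
    rw [hv]
    exact CGen.gen_mem j
  have hv2 : ∀ j, 0 ≤ (v j).2 := fun j => (mem_hatCone.mp (hvmem j)).2
  set T := Finset.univ.filter (fun j => 0 < (v j).2) with hT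
  -- decompose membership in the polyhedron
  have hdec : ∀ q ∈ Hset f b, ∃ c : Fin k → ℝ, (∀ j, 0 ≤ c j) ∧
      q = (∑ j, c j • v j).1 ∧ (1:ℝ) = ∑ j, c j * (v j).2 := by
    intro q hq
    have : ((q, (1:ℝ)) : E × ℝ) ∈ CGen v := by
      rw [← hv]
      exact mem_hat_one.mpr hq
    obtain ⟨c, hc, hsum⟩ := this
    refine ⟨c, hc, ?_, ?_⟩
    · rw [← hsum]
    · have := congrArg Prod.snd hsum
      simp only [Prod.snd_sum] at this
      simpa [Prod.smul_snd] using this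
  obtain ⟨p0, hp0⟩ := hne
  have hTne : T.Nonempty := by
    obtain ⟨c, hc, -, hone⟩ := hdec p0 hp0
    by_contra hTe
    rw [Finset.not_nonempty_iff_eq_empty] at hTe
    have hz : ∀ j, (v j).2 = 0 := by
      intro j
      by_contra hj
      have : j ∈ T := by
        rw [hT]
        simp only [Finset.mem_filter, Finset.mem_univ, true_and]
        exact lt_of_le_of_ne (hv2 j) (Ne.symm hj)
      rw [hTe] at this
      exact absurd this (Finset.notMem_empty j)
    have : (1:ℝ) = 0 := by
      rw [hone]
      apply Finset.sum_eq_zero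
      intro j _
      rw [hz j, mul_zero]
    norm_num at this
  set μ := T.inf' hTne (fun j => x (v j).1 / (v j).2) with hμ
  obtain ⟨j0, hj0T, hj0⟩ := T.exists_mem_eq_inf' hTne (fun j => x (v j).1 / (v j).2)
  have hs0 : 0 < (v j0).2 := by
    rw [hT] at hj0T
    simpa using hj0T
  refine ⟨((v j0).2)⁻¹ • (v j0).1, ?_, ?_⟩
  · intro i
    have h := (mem_hatCone.mp (hvmem j0)).1 i
    have he : f i (((v j0).2)⁻¹ • (v j0).1) = ((v j0).2)⁻¹ * f i (v j0).1 := by simp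
    rw [he]
    rw [inv_mul_le_iff₀ hs0]
    linarith [h]
  · intro q hq
    obtain ⟨c, hc, hq1, hone⟩ := hdec q hq
    have hxp : x (((v j0).2)⁻¹ • (v j0).1) = μ := by
      rw [map_smul, smul_eq_mul, hμ, hj0, div_eq_inv_mul]
    rw [hxp]
    have hxq : x q = ∑ j, c j * x (v j).1 := by
      rw [hq1, Prod.fst_sum, map_sum]
      apply Finset.sum_congr rfl
      intro j _
      simp [Prod.smul_fst]
    rw [hxq]
    have hterm : ∀ j, c j * (μ * (v j).2) ≤ c j * x (v j).1 := by
      intro j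
      apply mul_le_mul_of_nonneg_left _ (hc j)
      rcases eq_or_lt_of_le (hv2 j) with h0 | hpos
      · rw [← h0, mul_zero]
        apply hx
        rw [← mem_hat_zero (b := b)]
        have hvj : ((v j).1, (0:ℝ)) = v j := Prod.ext rfl h0
        rw [hvj]
        exact hvmem j
      · have hjT : j ∈ T := by
          rw [hT]
          simp only [Finset.mem_filter, Finset.mem_univ, true_and]
          exact hpos
        have := Finset.inf'_le (fun j => x (v j).1 / (v j).2) hjT
        rw [← hμ] at this
        rw [le_div_iff₀ hpos] at this
        linarith
    calc μ = μ * ∑ j, c j * (v j).2 := by rw [← hone, mul_one]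
      _ = ∑ j, c j * (μ * (v j).2) := by
          rw [Finset.mul_sum]
          apply Finset.sum_congr rfl
          intro j _
          ring
      _ ≤ ∑ j, c j * x (v j).1 := Finset.sum_le_sum (fun j _ => hterm j)

set_option maxHeartbeats 1000000


/-- `T` is half-extreme in `S` if whenever a proper convex combination of two
points of `S` lies in `T`, the first endpoint lies in `T`. -/
def HalfExtreme (S T : Set E) : Prop :=
  ∀ w ∈ S, ∀ y ∈ S, ∀ t : ℝ, 0 < t → t < 1 → (1 - t) • w + t • y ∈ T → w ∈ T

theorem faceSet_halfExtreme (S : Set E) (x : E →ₗ[ℝ] ℝ) : HalfExtreme S (faceSet S x) := by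
  intro w hw y hy t ht0 ht1 hz
  have hxw : x ((1-t) • w + t • y) ≤ x w := hz.2 w hw
  have hxy : x ((1-t) • w + t • y) ≤ x y := hz.2 y hy
  have hz' : x ((1-t) • w + t • y) = (1-t) * x w + t * x y := by simp
  have hwz : x w = x ((1-t) • w + t • y) := by nlinarith
  exact ⟨hw, fun v hv => hwz ▸ hz.2 v hv⟩

/-- A nonempty convex half-extreme subset of a polyhedron is a face. -/
theorem halfExtreme_isFaceOf {m : ℕ} {f : Fin m → E →ₗ[ℝ] ℝ} {b : Fin m → ℝ} {τ : Set E}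
    (hτsub : τ ⊆ Hset f b) (hne : τ.Nonempty) (hconv : Convex ℝ τ)
    (hext : HalfExtreme (Hset f b) τ) :
    ∃ x : E →ₗ[ℝ] ℝ, τ = faceSet (Hset f b) x := by
  classical
  obtain ⟨I, hI⟩ : ∃ I : Finset (Fin m), I = Finset.univ.filter (fun i => ∀ u ∈ τ, f i u = b i) :=
    ⟨_, rfl⟩
  refine ⟨-∑ i ∈ I, f i, ?_⟩
  obtain ⟨x, hx⟩ : ∃ x : E →ₗ[ℝ] ℝ, x = -∑ i ∈ I, f i := ⟨_, rfl⟩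
  rw [← hx]
  have hxval : ∀ u : E, x u = -∑ i ∈ I, f i u := by
    intro u
    rw [hx]
    simp [LinearMap.sum_apply]
  have hval : ∀ u ∈ τ, x u = -∑ i ∈ I, b i := by
    intro u hu
    rw [hxval]
    congr 1
    refine Finset.sum_congr rfl (fun i hi => ?_)
    rw [hI] at hi
    simp only [Finset.mem_filter, Finset.mem_univ, true_and] at hi
    exact hi u hu
  have hlb : ∀ w ∈ Hset f b, -∑ i ∈ I, b i ≤ x w := by
    intro w hw
    rw [hxval]
    apply neg_le_neg
    exact Finset.sum_le_sum (fun i _ => hw i)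
  -- construct the relatively interior point z of τ
  have hpick : ∀ j : Fin m, ∃ u, u ∈ τ ∧ (j ∉ I → f j u < b j) := by
    intro j
    by_cases hj : j ∈ I
    · obtain ⟨u, hu⟩ := hne
      exact ⟨u, hu, fun h => absurd hj h⟩
    · have hj' := hj
      rw [hI] at hj'
      simp only [Finset.mem_filter, Finset.mem_univ, true_and, not_forall] at hj'
      obtain ⟨u, hu, hneq⟩ := hj'
      exact ⟨u, hu, fun _ => lt_of_le_of_ne (hτsub hu j) hneq⟩
  choose uu huu1 huu2 using hpick
  have hzex : ∃ z, z ∈ τ ∧ ∀ j : Fin m, j ∉ I → f j z < b j := by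
    obtain ⟨J, hJdef⟩ : ∃ J : Finset (Fin m), J = Finset.univ.filter (fun j : Fin m => j ∉ I) :=
      ⟨_, rfl⟩
    rcases J.eq_empty_or_nonempty with hJ | hJne
    · obtain ⟨z, hz⟩ := hne
      refine ⟨z, hz, fun j hj => ?_⟩
      exfalso
      have : j ∈ J := by
        rw [hJdef]
        simp [hj]
      rw [hJ] at this
      exact absurd this (Finset.notMem_empty j)
    · have hcard : (0:ℝ) < (J.card : ℝ) := by
        have := Finset.card_pos.mpr hJne
        exact_mod_cast this
      obtain ⟨z, hz⟩ : ∃ z : E, z = ∑ j ∈ J, ((J.card : ℝ))⁻¹ • uu j := ⟨_, rfl⟩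
      have hzmem : z ∈ τ := by
        rw [hz]
        apply hconv.sum_mem
        · intro i _
          exact inv_nonneg.mpr hcard.le
        · rw [Finset.sum_const, nsmul_eq_mul, mul_inv_cancel₀ (ne_of_gt hcard)]
        · intro i _
          exact huu1 i
      refine ⟨z, hzmem, fun j0 hj0 => ?_⟩
      have hj0J : j0 ∈ J := by
        rw [hJdef]
        simp [hj0]
      have hfz : f j0 z = ∑ j ∈ J, ((J.card : ℝ))⁻¹ * f j0 (uu j) := by
        rw [hz, map_sum]
        apply Finset.sum_congr rfl
        intro j _
        simp
      rw [hfz]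
      have hlt : ∑ j ∈ J, ((J.card : ℝ))⁻¹ * f j0 (uu j)
          < ∑ _j ∈ J, ((J.card : ℝ))⁻¹ * b j0 := by
        apply Finset.sum_lt_sum
        · intro j _
          have : f j0 (uu j) ≤ b j0 := hτsub (huu1 j) j0
          exact mul_le_mul_of_nonneg_left this (inv_nonneg.mpr hcard.le)
        · refine ⟨j0, hj0J, ?_⟩
          have := huu2 j0 hj0
          exact mul_lt_mul_of_pos_left this (inv_pos.mpr hcard)
      have hsum : ∑ _j ∈ J, ((J.card : ℝ))⁻¹ * b j0 = b j0 := by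
        rw [Finset.sum_const, nsmul_eq_mul, ← mul_assoc, mul_inv_cancel₀ (ne_of_gt hcard), one_mul]
      rw [hsum] at hlt
      exact hlt
  obtain ⟨z, hzmem, hzlt⟩ := hzex
  apply Subset.antisymm
  · intro u hu
    refine ⟨hτsub hu, fun v hv => ?_⟩
    rw [hval u hu]
    exact hlb v hv
  · intro w hw
    have hwH : w ∈ Hset f b := hw.1
    have hweq : x w = -∑ i ∈ I, b i := by
      have h1 := hlb w hwH
      have h2 : x w ≤ -∑ i ∈ I, b i := by
        rw [← hval z hzmem]
        exact hw.2 z (hτsub hzmem)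
      linarith
    have hwI : ∀ i ∈ I, f i w = b i := by
      have hsum0 : ∑ i ∈ I, (b i - f i w) = 0 := by
        rw [Finset.sum_sub_distrib]
        have := hxval w
        rw [hweq] at this
        have h3 : ∑ i ∈ I, f i w = ∑ i ∈ I, b i := by linarith [neg_injective this]
        rw [h3]
        ring
      intro i hi
      have hnn : ∀ i ∈ I, 0 ≤ b i - f i w := fun i _ => by
        have := hwH i
        linarith
      have := (Finset.sum_eq_zero_iff_of_nonneg hnn).mp hsum0 i hi
      linarith
    -- epsilon argument
    have hεex : ∃ ε : ℝ, 0 < ε ∧ z + ε • (z - w) ∈ Hset f b := by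
      obtain ⟨K, hK⟩ : ∃ K : Finset (Fin m), K = Finset.univ.filter (fun j : Fin m => f j w < f j z) :=
        ⟨_, rfl⟩
      have hbound : ∀ ε : ℝ, 0 < ε → (∀ j ∈ K, ε ≤ (b j - f j z) / (f j z - f j w)) →
          z + ε • (z - w) ∈ Hset f b := by
        intro ε hε hεK j
        have hfj : f j (z + ε • (z - w)) = f j z + ε * (f j z - f j w) := by
          simp only [map_add, map_smul, map_sub, smul_eq_mul]
        rw [hfj]
        by_cases hjK : j ∈ K
        · have h1 := hεK j hjK
          have h2 : f j w < f j z := by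
            rw [hK] at hjK
            simpa using hjK
          rw [le_div_iff₀ (by linarith)] at h1
          have hjI : j ∉ I := by
            intro hjI
            have hw1 : f j w = b j := hwI j hjI
            have hz1 : f j z = b j := by
              have : f j z ≤ b j := hτsub hzmem j
              -- j ∈ I means f j z = b j since z ∈ τ
              rw [hI] at hjI
              simp only [Finset.mem_filter, Finset.mem_univ, true_and] at hjI
              exact hjI z hzmem
            rw [hw1, hz1] at h2
            exact lt_irrefl _ h2
          have := hzlt j hjI
          linarith
        · have h2 : ¬ (f j w < f j z) := by
            rw [hK] at hjK
            simpa using hjK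
          push_neg at h2
          have h3 : ε * (f j z - f j w) ≤ 0 :=
            mul_nonpos_of_nonneg_of_nonpos hε.le (by linarith)
          have := hτsub hzmem j
          linarith
      rcases K.eq_empty_or_nonempty with hKe | hKne
      · refine ⟨1, one_pos, hbound 1 one_pos ?_⟩
        intro j hj
        rw [hKe] at hj
        exact absurd hj (Finset.notMem_empty j)
      · obtain ⟨ε, hε⟩ : ∃ ε : ℝ, ε = min 1 (K.inf' hKne (fun j => (b j - f j z) / (f j z - f j w))) :=
          ⟨_, rfl⟩
        have hεpos : 0 < ε := by
          rw [hε]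
          apply lt_min one_pos
          rw [Finset.lt_inf'_iff]
          intro j hj
          have h2 : f j w < f j z := by
            rw [hK] at hj
            simpa using hj
          have hjI : j ∉ I := by
            intro hjI
            have hw1 : f j w = b j := hwI j hjI
            have hz1 : f j z = b j := by
              rw [hI] at hjI
              simp only [Finset.mem_filter, Finset.mem_univ, true_and] at hjI
              exact hjI z hzmem
            rw [hw1, hz1] at h2
            exact lt_irrefl _ h2
          apply div_pos _ (by linarith)
          linarith [hzlt j hjI]
        refine ⟨ε, hεpos, hbound ε hεpos ?_⟩
        intro j hj
        calc ε ≤ K.inf' hKne (fun j => (b j - f j z) / (f j z - f j w)) := by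
              rw [hε]; exact min_le_right _ _
          _ ≤ _ := Finset.inf'_le _ hj
    obtain ⟨ε, hεpos, hymem⟩ := hεex
    obtain ⟨y, hy⟩ : ∃ y : E, y = z + ε • (z - w) := ⟨_, rfl⟩
    rw [← hy] at hymem
    have ht0 : (0:ℝ) < 1/(1+ε) := by positivity
    have ht1 : 1/(1+ε) < 1 := by
      rw [div_lt_one (by linarith)]
      linarith
    have hcombo : (1 - 1/(1+ε)) • w + (1/(1+ε)) • y = z := by
      rw [hy, smul_add, smul_smul, smul_sub]
      have h1 : (1:ℝ) - 1/(1+ε) = ε/(1+ε) := by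
        field_simp
        ring
      have h2 : (1:ℝ)/(1+ε) * ε = ε/(1+ε) := by
        field_simp
      rw [h1, h2]
      have h3 : (1/(1+ε)) • z + ((ε/(1+ε)) • z - (ε/(1+ε)) • w)
          = (1/(1+ε) + ε/(1+ε)) • z - (ε/(1+ε)) • w := by
        rw [add_smul]
        abel
      have h4 : (1:ℝ)/(1+ε) + ε/(1+ε) = 1 := by
        field_simp
      rw [h3, h4, one_smul]
      abel
    exact hext w hwH y hymem (1/(1+ε)) ht0 ht1 (by rw [hcombo]; exact hzmem)



theorem hset_inter_hset {m m' : ℕ} (f : Fin m → E →ₗ[ℝ] ℝ) (b : Fin m → ℝ)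
    (g : Fin m' → E →ₗ[ℝ] ℝ) (c : Fin m' → ℝ) :
    Hset f b ∩ Hset g c = Hset (Fin.append f g) (Fin.append b c) := by
  ext u
  simp only [Hset, mem_inter_iff, mem_setOf_eq]
  constructor
  · rintro ⟨h1, h2⟩ i
    refine Fin.addCases (fun i => ?_) (fun i => ?_) i
    · simpa [Fin.append_left] using h1 i
    · simpa [Fin.append_right] using h2 i
  · intro h
    constructor
    · intro i
      have := h (Fin.castAdd m' i)
      simpa [Fin.append_left] using this
    · intro i
      have := h (Fin.natAdd m i)
      simpa [Fin.append_right] using this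

theorem fin_append_zero {m m' : ℕ} :
    Fin.append (0 : Fin m → ℝ) (0 : Fin m' → ℝ) = (0 : Fin (m + m') → ℝ) := by
  ext i
  refine Fin.addCases (fun i => ?_) (fun i => ?_) i <;> simp [Fin.append_left, Fin.append_right]

/-- For polyhedra in a complex that intersect, the intersection of their
recession cones is a face of each recession cone, cut out by a functional
nonnegative on the recession cone. -/
theorem rec_inter_common [FiniteDimensional ℝ E] {P : Set (Set E)} (hP : IsPolyComplex P)
    {M N : Set E} (hM : M ∈ P) (hN : N ∈ P) (hmeet : (M ∩ N).Nonempty) :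
    ∃ x : E →ₗ[ℝ] ℝ, (∀ u ∈ recPoly M, 0 ≤ x u) ∧
      recPoly M ∩ recPoly N = faceSet (recPoly M) x := by
  obtain ⟨-, -, hpoly, -, hglue⟩ := hP
  obtain ⟨⟨hfMne, x, hMN⟩, -⟩ := hglue M hM N hN hmeet
  obtain ⟨m, f, b, hMd0⟩ := (hpoly M hM).1
  obtain ⟨m', g, c, hNd0⟩ := (hpoly N hN).1
  have hMd : M = Hset f b := hMd0
  have hNd : N = Hset g c := hNd0
  have hMne : M.Nonempty := (hpoly M hM).2
  have hNne : N.Nonempty := (hpoly N hN).2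
  obtain ⟨u0, hu0⟩ := hfMne
  rw [hMN] at hu0
  -- x is bounded below on M
  have hbdd : ∀ v ∈ M, x u0 ≤ x v := hu0.2
  obtain ⟨pM, hpM⟩ := hMne
  have hMneH : (Hset f b).Nonempty := ⟨pM, by rw [← hMd]; exact hpM⟩
  have hNneH : (Hset g c).Nonempty := by rw [← hNd]; exact hNne
  have hrecM : recPoly M = Hset f 0 := by rw [hMd]; exact recPoly_hset hMneH
  have hrecN : recPoly N = Hset g 0 := by rw [hNd]; exact recPoly_hset hNneH
  have hxnnH : ∀ u ∈ Hset f 0, 0 ≤ x u := by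
    have hpM' : pM ∈ Hset f b := by rw [← hMd]; exact hpM
    have hbdd' : ∀ v ∈ Hset f b, x u0 ≤ x v := by
      intro v hv
      exact hbdd v (by rw [hMd]; exact hv)
    exact hset_rec_nonneg_of_bddBelow hpM' hbdd'
  have hxnn : ∀ u ∈ recPoly M, 0 ≤ x u := by
    rw [hrecM]
    exact hxnnH
  refine ⟨x, hxnn, ?_⟩
  -- recPoly M ∩ recPoly N = recPoly (M ∩ N)
  have hint : M ∩ N = Hset (Fin.append f g) (Fin.append b c) := by
    rw [hMd, hNd, hset_inter_hset]
  have hrec1 : recPoly M ∩ recPoly N = Hset (Fin.append f g) (0 : Fin (m + m') → ℝ) := by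
    rw [hrecM, hrecN, hset_inter_hset, fin_append_zero]
  have hrec2 : recPoly (M ∩ N) = Hset (Fin.append f g) (0 : Fin (m + m') → ℝ) := by
    rw [hint]
    exact recPoly_hset (hint ▸ hmeet)
  -- also M ∩ N = M ∩ {x ≤ x u0}
  have hface : M ∩ N = Hset (Fin.snoc f x) (Fin.snoc b (x u0)) := by
    rw [hMN, faceSet_eq_inter hu0, ← hset_inter_halfspace, hMd]
  have hrec3 : recPoly (M ∩ N) = Hset (Fin.snoc f x) (0 : Fin (m+1) → ℝ) := by
    rw [hface]
    exact recPoly_hset (hface ▸ hmeet)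
  have hrec4 : Hset (Fin.snoc f x) (0 : Fin (m+1) → ℝ) = Hset f 0 ∩ {u | x u ≤ 0} :=
    (hset_zero_inter_halfspace f x).symm
  calc recPoly M ∩ recPoly N
      = Hset (Fin.append f g) (0 : Fin (m + m') → ℝ) := hrec1
    _ = recPoly (M ∩ N) := hrec2.symm
    _ = Hset (Fin.snoc f x) (0 : Fin (m+1) → ℝ) := hrec3
    _ = Hset f 0 ∩ {u | x u ≤ 0} := hrec4
    _ = faceSet (Hset f 0) x := (faceSet_hsetZero_eq hxnnH).symm
    _ = faceSet (recPoly M) x := by rw [hrecM]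

theorem polyComplex_member_closed [FiniteDimensional ℝ E] {P : Set (Set E)}
    (hP : IsPolyComplex P) {M : Set E} (hM : M ∈ P) : IsClosed M := by
  obtain ⟨m, f, b, hMd⟩ := (hP.2.2.1 M hM).1
  rw [hMd]
  exact hset_closed f b

theorem polySupport_closed [FiniteDimensional ℝ E] {P : Set (Set E)}
    (hP : IsPolyComplex P) : IsClosed (polySupport P) := by
  apply Set.Finite.isClosed_biUnion hP.2.1
  intro M hM
  exact polyComplex_member_closed hP hM

/-- Recession directions transfer between basepoints of a closed convex set. -/
theorem locRec_transfer {D : Set E} (hDc : IsClosed D) (hDx : Convex ℝ D) {p q u : E}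
    (hq : q ∈ D) (hu : ∀ t : ℝ, 0 ≤ t → p + t • u ∈ D) {t : ℝ} (ht : 0 ≤ t) :
    q + t • u ∈ D := by
  have hseq : ∀ k : ℕ, q + ((k:ℝ)+1)⁻¹ • (p - q) + t • u ∈ D := by
    intro k
    have hlam0 : (0:ℝ) < ((k:ℝ)+1)⁻¹ := by positivity
    have hlam1 : ((k:ℝ)+1)⁻¹ ≤ 1 := by
      rw [inv_le_one_iff₀]
      right
      linarith [Nat.cast_nonneg (α := ℝ) k]
    have hmem := hu (t * ((k:ℝ)+1)) (by positivity)
    have hcomb := hDx hq hmem (by linarith : (0:ℝ) ≤ 1 - ((k:ℝ)+1)⁻¹) hlam0.le (by ring)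
    have : (1 - ((k:ℝ)+1)⁻¹) • q + ((k:ℝ)+1)⁻¹ • (p + (t * ((k:ℝ)+1)) • u)
        = q + ((k:ℝ)+1)⁻¹ • (p - q) + t • u := by
      have hne : ((k:ℝ)+1) ≠ 0 := by positivity
      rw [sub_smul, one_smul, smul_add, smul_smul, smul_sub]
      rw [inv_mul_eq_div, mul_div_assoc, div_self hne, mul_one]
      abel
    rw [this] at hcomb
    exact hcomb
  have h1 : Filter.Tendsto (fun k : ℕ => ((k:ℝ)+1)⁻¹) Filter.atTop (nhds 0) :=
    tendsto_one_div_add_atTop_nhds_zero_nat.congr (by intro k; rw [one_div])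
  have h2 : Filter.Tendsto (fun k : ℕ => ((k:ℝ)+1)⁻¹ • (p - q)) Filter.atTop (nhds 0) := by
    have := h1.smul_const (p - q)
    simpa using this
  have h3 := (tendsto_const_nhds (x := q) (f := Filter.atTop (α := ℕ))).add h2
  have h4 := h3.add (tendsto_const_nhds (x := t • u) (f := Filter.atTop (α := ℕ)))
  have hT : Filter.Tendsto (fun k : ℕ => q + ((k:ℝ)+1)⁻¹ • (p - q) + t • u)
      Filter.atTop (nhds (q + t • u)) := by
    simpa using h4
  exact hDc.mem_of_tendsto hT (Filter.Eventually.of_forall hseq)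



theorem recPoly_ray {M : Set E} (hpoly : IsPolyhedron M) {p z : E} (hp : p ∈ M)
    (hz : z ∈ recPoly M) {s : ℝ} (hs : 0 ≤ s) : p + s • z ∈ M := by
  obtain ⟨m, f, b, hMd0⟩ := hpoly
  have hMd : M = Hset f b := hMd0
  have hrec : recPoly M = Hset f 0 := by
    rw [hMd]
    exact recPoly_hset ⟨p, by rw [← hMd]; exact hp⟩
  rw [hMd]
  exact hset_ray (by rw [← hMd]; exact hp) (by rw [← hrec]; exact hz) hs

theorem recPoly_zero_mem {M : Set E} : (0:E) ∈ recPoly M := by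
  intro q hq
  simpa using hq

theorem seg_shift {a c s : ℝ} (hac : a + c = 1) (p p' z : E) :
    a • (p + s • z) + c • (p' + s • z) = (a • p + c • p') + s • z := by
  rw [smul_add, smul_add, add_add_add_comm]
  congr 1
  rw [smul_smul, smul_smul, ← add_smul]
  congr 1
  rw [← add_mul, hac, one_mul]

theorem bad_member_bound {M : Set E} (hpoly : IsPolyhedron M) (hMne : M.Nonempty)
    {z : E} (hz : z ∉ recPoly M) (p p' : E) :
    ∃ β : ℝ, ∀ s : ℝ, β < s → ∀ q ∈ segment ℝ p p', q + s • z ∉ M := by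
  obtain ⟨m, f, b, hMd0⟩ := hpoly
  have hMd : M = Hset f b := hMd0
  have hrec : recPoly M = Hset f 0 := by
    rw [hMd]
    exact recPoly_hset (by rw [← hMd]; exact hMne)
  have hex : ∃ i, 0 < f i z := by
    by_contra hno
    push_neg at hno
    apply hz
    rw [hrec]
    intro i
    simpa using hno i
  obtain ⟨i, hi⟩ := hex
  refine ⟨(b i - min (f i p) (f i p')) / f i z, ?_⟩
  intro s hs q hq hmem
  obtain ⟨a, c, ha, hc, hac, rfl⟩ := hq
  have hfiq : min (f i p) (f i p') ≤ f i (a • p + c • p') := by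
    have he : f i (a • p + c • p') = a * f i p + c * f i p' := by simp
    rw [he]
    have h1 := mul_le_mul_of_nonneg_left (min_le_left (f i p) (f i p')) ha
    have h2 := mul_le_mul_of_nonneg_left (min_le_right (f i p) (f i p')) hc
    have h3 : a * min (f i p) (f i p') + c * min (f i p) (f i p')
        = min (f i p) (f i p') := by rw [← add_mul, hac, one_mul]
    linarith
  have hmem' : f i (a • p + c • p' + s • z) ≤ b i := by
    rw [hMd] at hmem
    exact hmem i
  have he2 : f i (a • p + c • p' + s • z) = f i (a • p + c • p') + s * f i z := by
    simp
  rw [he2] at hmem'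
  rw [div_lt_iff₀ hi] at hs
  linarith

/-- Main theorem: with convex support, intersections of recession cones of
members are half-extreme. -/
theorem rec_inter_halfExtreme [FiniteDimensional ℝ E] {P : Set (Set E)} (hP : IsPolyComplex P)
    (hconv : Convex ℝ (polySupport P)) {Λ Λ' : Set E} (hΛ : Λ ∈ P) (hΛ' : Λ' ∈ P) :
    HalfExtreme (recPoly Λ) (recPoly Λ ∩ recPoly Λ') := by
  classical
  intro w hw y hy t ht0 ht1 hzmem
  obtain ⟨z, hzdef⟩ : ∃ z : E, z = (1-t) • w + t • y := ⟨_, rfl⟩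
  rw [← hzdef] at hzmem
  refine ⟨hw, ?_⟩
  have hpolyP := hP.2.2.1
  obtain ⟨p, hp⟩ := (hpolyP Λ hΛ).2
  obtain ⟨p', hp'⟩ := (hpolyP Λ' hΛ').2
  have hDc := polySupport_closed hP
  have hsub : ∀ {M : Set E}, M ∈ P → M ⊆ polySupport P := by
    intro M hM q hq
    exact mem_biUnion hM hq
  have hzray : ∀ q ∈ polySupport P, ∀ s : ℝ, 0 ≤ s → q + s • z ∈ polySupport P := by
    intro q hq s hs
    refine locRec_transfer hDc hconv (p := p) hq ?_ hs
    intro r hr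
    exact hsub hΛ (recPoly_ray (hpolyP Λ hΛ).1 hp hzmem.1 hr)
  -- uniform height beyond which only z-recessive members meet the moved segment
  have hbads : ∃ s : ℝ, 0 < s ∧
      ∀ M ∈ P, z ∉ recPoly M → ∀ q ∈ segment ℝ p p', q + s • z ∉ M := by
    have hbad : ∀ M ∈ P, z ∉ recPoly M →
        ∃ β : ℝ, ∀ s : ℝ, β < s → ∀ q ∈ segment ℝ p p', q + s • z ∉ M :=
      fun M hM hzM => bad_member_bound (hpolyP M hM).1 (hpolyP M hM).2 hzM p p'
    choose! β hβ using hbad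
    have hQfin : (β '' {M | M ∈ P ∧ z ∉ recPoly M}).Finite :=
      (hP.2.1.subset (fun M hM => hM.1)).image _
    obtain ⟨s0, hs0⟩ := hQfin.bddAbove
    have hM0 : (0:ℝ) ≤ max s0 0 := le_max_right _ _
    refine ⟨max s0 0 + 1, by linarith, ?_⟩
    intro M hM hzM q hq
    refine hβ M hM hzM _ ?_ q hq
    have h1 : β M ≤ s0 := hs0 (mem_image_of_mem _ ⟨hM, hzM⟩)
    have h2 : s0 ≤ max s0 0 := le_max_left _ _
    linarith
  obtain ⟨s, hspos, hsprop⟩ := hbads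
  obtain ⟨Sseg, hSseg⟩ : ∃ S : Set E, S = segment ℝ (p + s • z) (p' + s • z) := ⟨_, rfl⟩
  have hsegmem : ∀ q ∈ segment ℝ p p', q + s • z ∈ Sseg := by
    rintro q ⟨a, c, ha, hc, hac, rfl⟩
    rw [hSseg]
    exact ⟨a, c, ha, hc, hac, seg_shift hac p p' z⟩
  have hsegrep : ∀ yy ∈ Sseg, ∃ q ∈ segment ℝ p p', yy = q + s • z := by
    intro yy hyy
    rw [hSseg] at hyy
    obtain ⟨a, c, ha, hc, hac, rfl⟩ := hyy
    exact ⟨a • p + c • p', ⟨a, c, ha, hc, hac, rfl⟩, seg_shift hac p p' z⟩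
  have hSsegD : Sseg ⊆ polySupport P := by
    intro yy hyy
    obtain ⟨q, hq, rfl⟩ := hsegrep yy hyy
    exact hzray q (hconv.segment_subset (hsub hΛ hp) (hsub hΛ' hp') hq) s hspos.le
  have hgood : ∀ M ∈ P, (M ∩ Sseg).Nonempty → z ∈ recPoly M := by
    rintro M hM ⟨yy, hyyM, hyyS⟩
    by_contra hzM
    obtain ⟨q, hq, rfl⟩ := hsegrep yy hyyS
    exact hsprop M hM hzM q hq hyyM
  obtain ⟨R, hR⟩ : ∃ R : Set E → Set E → Prop,
      R = fun M N => N ∈ P ∧ (N ∩ Sseg).Nonempty ∧ (M ∩ N).Nonempty := ⟨_, rfl⟩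
  -- the chain reachability
  have hpz : p + s • z ∈ Λ := recPoly_ray (hpolyP Λ hΛ).1 hp hzmem.1 hspos.le
  have hpz' : p' + s • z ∈ Λ' := recPoly_ray (hpolyP Λ' hΛ').1 hp' hzmem.2 hspos.le
  have hpzS : p + s • z ∈ Sseg := by
    rw [hSseg]; exact left_mem_segment ℝ _ _
  have hpzS' : p' + s • z ∈ Sseg := by
    rw [hSseg]; exact right_mem_segment ℝ _ _
  have hreach : Relation.ReflTransGen R Λ Λ' := by
    obtain ⟨A, hA⟩ : ∃ A : Set E,
        A = ⋃ M ∈ {M | M ∈ P ∧ (M ∩ Sseg).Nonempty ∧ Relation.ReflTransGen R Λ M}, M :=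
      ⟨_, rfl⟩
    obtain ⟨B, hB⟩ : ∃ B : Set E,
        B = ⋃ M ∈ {M | M ∈ P ∧ (M ∩ Sseg).Nonempty ∧ ¬ Relation.ReflTransGen R Λ M}, M :=
      ⟨_, rfl⟩
    have hAc : IsClosed A := by
      rw [hA]
      exact Set.Finite.isClosed_biUnion (hP.2.1.subset (fun M hM => hM.1))
        (fun M hM => polyComplex_member_closed hP hM.1)
    have hBc : IsClosed B := by
      rw [hB]
      exact Set.Finite.isClosed_biUnion (hP.2.1.subset (fun M hM => hM.1))
        (fun M hM => polyComplex_member_closed hP hM.1)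
    have hcover : Sseg ⊆ A ∪ B := by
      intro yy hyy
      have hyD : yy ∈ polySupport P := hSsegD hyy
      obtain ⟨M, hM, hyM⟩ := mem_iUnion₂.mp hyD
      by_cases hr : Relation.ReflTransGen R Λ M
      · left
        rw [hA]
        exact mem_biUnion ⟨hM, ⟨yy, hyM, hyy⟩, hr⟩ hyM
      · right
        rw [hB]
        exact mem_biUnion ⟨hM, ⟨yy, hyM, hyy⟩, hr⟩ hyM
    have hconn : IsPreconnected Sseg := by
      rw [hSseg]
      exact (convex_segment _ _).isPreconnected
    have hSA : (Sseg ∩ A).Nonempty := by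
      refine ⟨p + s • z, hpzS, ?_⟩
      rw [hA]
      exact mem_biUnion ⟨hΛ, ⟨p + s • z, hpz, hpzS⟩, Relation.ReflTransGen.refl⟩ hpz
    by_cases hSB : (Sseg ∩ B).Nonempty
    · exfalso
      obtain ⟨y0, hy0S, hy0AB⟩ := isPreconnected_closed_iff.mp hconn A B hAc hBc hcover hSA hSB
      have hy0A := hy0AB.1
      have hy0B := hy0AB.2
      rw [hA] at hy0A
      rw [hB] at hy0B
      obtain ⟨M1, hM1, hyM1⟩ := mem_iUnion₂.mp hy0A
      obtain ⟨M2, hM2, hyM2⟩ := mem_iUnion₂.mp hy0B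
      exact hM2.2.2 (hM1.2.2.tail (by rw [hR]; exact ⟨hM2.1, hM2.2.1, ⟨y0, hyM1, hyM2⟩⟩))
    · by_contra hnr
      apply hSB
      refine ⟨p' + s • z, hpzS', ?_⟩
      rw [hB]
      exact mem_biUnion ⟨hΛ', ⟨p' + s • z, hpz', hpzS'⟩, hnr⟩ hpz'
  -- propagate membership of w and y along the chain
  have hprop : ∀ M, Relation.ReflTransGen R Λ M →
      M ∈ P ∧ z ∈ recPoly M ∧ w ∈ recPoly M ∧ y ∈ recPoly M := by
    intro M hM
    induction hM with
    | refl => exact ⟨hΛ, hzmem.1, hw, hy⟩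
    | @tail M0 N hab hbc ih =>
      rw [hR] at hbc
      obtain ⟨hN, hNmeet, hMN⟩ := hbc
      obtain ⟨hM0P, hzM0, hwM0, hyM0⟩ := ih
      have hzN : z ∈ recPoly N := hgood N hN hNmeet
      obtain ⟨x, hxnn, hfeq⟩ := rec_inter_common hP hM0P hN hMN
      have hface := faceSet_halfExtreme (recPoly M0) x
      have hzface : z ∈ faceSet (recPoly M0) x := by
        rw [← hfeq]
        exact ⟨hzM0, hzN⟩
      have hwface : w ∈ faceSet (recPoly M0) x :=
        hface w hwM0 y hyM0 t ht0 ht1 (by rw [← hzdef]; exact hzface)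
      have hyface : y ∈ faceSet (recPoly M0) x := by
        apply hface y hyM0 w hwM0 (1 - t) (by linarith) (by linarith)
        have he : (1 - (1 - t)) • y + (1 - t) • w = (1-t) • w + t • y := by
          rw [sub_sub_cancel, add_comm]
        rw [he, ← hzdef]
        exact hzface
      have hwN : w ∈ recPoly M0 ∩ recPoly N := by
        rw [hfeq]
        exact hwface
      have hyN : y ∈ recPoly M0 ∩ recPoly N := by
        rw [hfeq]
        exact hyface
      exact ⟨hN, hzN, hwN.2, hyN.2⟩
  exact (hprop Λ' hreach).2.2.1

/-- Intersections of recession cones of members are common faces. -/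
theorem rec_inter_isFaceOf [FiniteDimensional ℝ E] {P : Set (Set E)} (hP : IsPolyComplex P)
    (hconv : Convex ℝ (polySupport P)) {Λ Λ' : Set E} (hΛ : Λ ∈ P) (hΛ' : Λ' ∈ P) :
    ∃ x : E →ₗ[ℝ] ℝ, (∀ u ∈ recPoly Λ, 0 ≤ x u) ∧
      recPoly Λ ∩ recPoly Λ' = faceSet (recPoly Λ) x := by
  obtain ⟨m, f, b, hd0⟩ := (hP.2.2.1 Λ hΛ).1
  have hd : Λ = Hset f b := hd0
  have hrec : recPoly Λ = Hset f 0 := by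
    rw [hd]
    exact recPoly_hset (by rw [← hd]; exact (hP.2.2.1 Λ hΛ).2)
  obtain ⟨m', g, c, hd0'⟩ := (hP.2.2.1 Λ' hΛ').1
  have hd' : Λ' = Hset g c := hd0'
  have hrec' : recPoly Λ' = Hset g 0 := by
    rw [hd']
    exact recPoly_hset (by rw [← hd']; exact (hP.2.2.1 Λ' hΛ').2)
  have hτsub : recPoly Λ ∩ recPoly Λ' ⊆ Hset f 0 := by
    rw [← hrec]
    exact inter_subset_left
  have hτne : (recPoly Λ ∩ recPoly Λ').Nonempty :=
    ⟨0, recPoly_zero_mem, recPoly_zero_mem⟩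
  have hτconv : Convex ℝ (recPoly Λ ∩ recPoly Λ') := by
    rw [hrec, hrec']
    exact (hset_convex f 0).inter (hset_convex g 0)
  have hext : HalfExtreme (Hset f 0) (recPoly Λ ∩ recPoly Λ') := by
    rw [← hrec]
    exact rec_inter_halfExtreme hP hconv hΛ hΛ'
  obtain ⟨x, hx⟩ := halfExtreme_isFaceOf hτsub hτne hτconv hext
  refine ⟨x, ?_, ?_⟩
  · rw [hrec]
    apply faceSet_hsetZero_nonneg
    rw [← hx]
    exact hτne
  · rw [← hrec] at hx
    exact hx



/-- Faces of recession cones of members are recession cones of members. -/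
theorem face_rec_mem [FiniteDimensional ℝ E] {P : Set (Set E)} (hP : IsPolyComplex P)
    {Λ : Set E} (hΛ : Λ ∈ P) {x : E →ₗ[ℝ] ℝ}
    (hne : (faceSet (recPoly Λ) x).Nonempty) :
    ∃ F' ∈ P, recPoly F' = faceSet (recPoly Λ) x := by
  obtain ⟨m, f, b, hd0⟩ := (hP.2.2.1 Λ hΛ).1
  have hd : Λ = Hset f b := hd0
  have hΛne : (Hset f b).Nonempty := by rw [← hd]; exact (hP.2.2.1 Λ hΛ).2
  have hrec : recPoly Λ = Hset f 0 := by
    rw [hd]; exact recPoly_hset hΛne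
  rw [hrec] at hne ⊢
  have hxnn : ∀ u ∈ Hset f (0 : Fin m → ℝ), 0 ≤ x u := faceSet_hsetZero_nonneg hne
  obtain ⟨p, hpΛ, hpmin⟩ := hset_min_attained hΛne hxnn
  have hpF : p ∈ faceSet Λ x := by
    rw [hd]
    exact ⟨hpΛ, hpmin⟩
  have hF'P : faceSet Λ x ∈ P :=
    hP.2.2.2.1 Λ hΛ (faceSet Λ x) ⟨⟨p, hpF⟩, x, rfl⟩
  refine ⟨faceSet Λ x, hF'P, ?_⟩
  have hFd : faceSet Λ x = Hset (Fin.snoc f x) (Fin.snoc b (x p)) := by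
    rw [faceSet_eq_inter hpF, hd, hset_inter_halfspace]
  have hrecF : recPoly (faceSet Λ x) = Hset (Fin.snoc f x) (0 : Fin (m+1) → ℝ) := by
    rw [hFd]
    exact recPoly_hset (by rw [← hFd]; exact ⟨p, hpF⟩)
  rw [hrecF, ← hset_zero_inter_halfspace, ← faceSet_hsetZero_eq hxnn]

/-- The recession complex of a polyhedral complex with convex support is a
conic polyhedral complex. -/
theorem recComplex_conic [FiniteDimensional ℝ E] {P : Set (Set E)} (hP : IsPolyComplex P)
    (hconv : Convex ℝ (polySupport P)) : IsConicPolyComplex (recComplex P) := by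
  have hrecof : ∀ {Λ : Set E}, Λ ∈ P → ∃ (m : ℕ) (f : Fin m → E →ₗ[ℝ] ℝ),
      recPoly Λ = Hset f 0 := by
    intro Λ hΛ
    obtain ⟨m, f, b, hd0⟩ := (hP.2.2.1 Λ hΛ).1
    have hd : Λ = Hset f b := hd0
    exact ⟨m, f, by
      rw [hd]
      exact recPoly_hset (by rw [← hd]; exact (hP.2.2.1 Λ hΛ).2)⟩
  constructor
  · refine ⟨?_, ?_, ?_, ?_, ?_⟩
    · -- nonempty
      obtain ⟨Λ, hΛ⟩ := hP.1
      exact ⟨recPoly Λ, Λ, hΛ, rfl⟩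
    · -- finite
      have himg : recComplex P = recPoly '' P := by
        ext C
        simp [recComplex, image, eq_comm]
      rw [himg]
      exact hP.2.1.image _
    · -- polyhedron and nonempty
      rintro S ⟨Λ, hΛ, rfl⟩
      obtain ⟨m, f, hrec⟩ := hrecof hΛ
      exact ⟨⟨m, f, 0, hrec⟩, ⟨0, recPoly_zero_mem⟩⟩
    · -- closed under faces
      rintro S ⟨Λ, hΛ, rfl⟩ F ⟨hFne, x, hFeq⟩
      obtain ⟨F', hF'P, hF'⟩ := face_rec_mem hP hΛ (hFeq ▸ hFne)
      exact ⟨F', hF'P, by rw [hFeq, hF']⟩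
    · -- common faces
      rintro S ⟨Λ, hΛ, rfl⟩ T ⟨Λ', hΛ', rfl⟩ hmeet
      constructor
      · obtain ⟨x, hxnn, heq⟩ := rec_inter_isFaceOf hP hconv hΛ hΛ'
        exact ⟨hmeet, x, heq⟩
      · obtain ⟨x, hxnn, heq⟩ := rec_inter_isFaceOf hP hconv hΛ' hΛ
        rw [inter_comm] at heq
        exact ⟨hmeet, x, heq⟩
  · -- polyhedral cones
    rintro S ⟨Λ, hΛ, rfl⟩
    obtain ⟨m, f, hrec⟩ := hrecof hΛ
    rw [hrec]
    exact hset_zero_isPolyhedralCone f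



theorem smul_pair (t : ℝ) (u : E) : t • (u, (1:ℝ)) = (t • u, t) := by
  rw [Prod.smul_mk, smul_eq_mul, mul_one]

theorem coneOver_eq_hat [FiniteDimensional ℝ E] {m : ℕ} {f : Fin m → E →ₗ[ℝ] ℝ}
    {b : Fin m → ℝ} (hne : (Hset f b).Nonempty) :
    coneOver (Hset f b) = Hset (hatMaps f b) 0 := by
  apply Subset.antisymm
  · apply closure_minimal
    · rintro y ⟨u, hu, t, ht, rfl⟩
      rw [smul_pair, mem_hatCone]
      refine ⟨fun i => ?_, ht.le⟩
      have h1 := hu i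
      have he : f i (t • u) = t * f i u := by simp
      simp only [he]
      nlinarith
    · exact hset_closed _ _
  · rintro ⟨u, s⟩ hy
    rw [mem_hatCone] at hy
    obtain ⟨h1, h2⟩ := hy
    rcases eq_or_lt_of_le h2 with h0 | hpos
    · subst h0
      obtain ⟨p, hp⟩ := hne
      have hu0 : u ∈ Hset f 0 := by
        intro i
        have := h1 i
        simpa using this
      have hseqmem : ∀ k : ℕ, ((((k:ℝ)+1)⁻¹ • p + u, ((k:ℝ)+1)⁻¹) : E × ℝ) ∈
          {y : E × ℝ | ∃ u ∈ Hset f b, ∃ t : ℝ, 0 < t ∧ y = t • (u, (1:ℝ))} := by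
        intro k
        have hkpos : (0:ℝ) < (k:ℝ)+1 := by positivity
        refine ⟨p + ((k:ℝ)+1) • u, hset_ray hp hu0 hkpos.le, ((k:ℝ)+1)⁻¹,
          by positivity, ?_⟩
        rw [smul_pair]
        refine Prod.ext ?_ rfl
        simp only [smul_add, smul_smul, inv_mul_cancel₀ (ne_of_gt hkpos), one_smul]
      have h1' : Filter.Tendsto (fun k : ℕ => ((k:ℝ)+1)⁻¹) Filter.atTop (nhds 0) :=
        tendsto_one_div_add_atTop_nhds_zero_nat.congr (by intro k; rw [one_div])
      have h2' : Filter.Tendsto (fun k : ℕ => ((k:ℝ)+1)⁻¹ • p + u) Filter.atTop (nhds u) := by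
        have := (h1'.smul_const p).add (tendsto_const_nhds (x := u)
          (f := Filter.atTop (α := ℕ)))
        simpa using this
      have htend : Filter.Tendsto
          (fun k : ℕ => ((((k:ℝ)+1)⁻¹ • p + u, ((k:ℝ)+1)⁻¹) : E × ℝ))
          Filter.atTop (nhds ((u, 0) : E × ℝ)) := h2'.prodMk_nhds h1'
      exact mem_closure_of_tendsto htend (Filter.Eventually.of_forall hseqmem)
    · apply subset_closure
      refine ⟨s⁻¹ • u, fun i => ?_, s, hpos, ?_⟩
      · have he : f i (s⁻¹ • u) = s⁻¹ * f i u := by simp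
        rw [he, inv_mul_le_iff₀ hpos]
        exact h1 i
      · rw [smul_pair, smul_inv_smul₀ (ne_of_gt hpos)]

theorem pair_split (x : (E × ℝ) →ₗ[ℝ] ℝ) (u : E) (s : ℝ) :
    x (u, s) = x (u, 0) + s * x (0, 1) := by
  have he : ((u, s) : E × ℝ) = (u, 0) + s • ((0:E), (1:ℝ)) := by
    rw [Prod.smul_mk, Prod.mk_add_mk]
    simp
  rw [he, map_add, map_smul, smul_eq_mul]

/-- `recPoly Λ ×ˢ {0}` as an H-cone. -/
theorem prodZero_eq_hset {m : ℕ} (f : Fin m → E →ₗ[ℝ] ℝ) :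
    (Hset f 0 : Set E) ×ˢ ({0} : Set ℝ)
      = Hset (Fin.snoc (hatMaps f 0) (LinearMap.snd ℝ E ℝ)) (0 : Fin (m+2) → ℝ) := by
  rw [← hset_zero_inter_halfspace]
  ext y
  rcases y with ⟨u, s⟩
  simp only [mem_inter_iff, mem_prod, mem_singleton_iff, mem_setOf_eq, LinearMap.snd_apply]
  rw [mem_hatCone]
  constructor
  · rintro ⟨hu, rfl⟩
    refine ⟨⟨fun i => ?_, le_refl 0⟩, le_refl 0⟩
    have := hu i
    simpa using this
  · rintro ⟨⟨h1, h2⟩, h3⟩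
    have hs : s = 0 := le_antisymm h3 h2
    subst hs
    refine ⟨fun i => ?_, rfl⟩
    have := h1 i
    simpa using this



theorem hat_inter {m m' : ℕ} (f : Fin m → E →ₗ[ℝ] ℝ) (b : Fin m → ℝ)
    (g : Fin m' → E →ₗ[ℝ] ℝ) (c : Fin m' → ℝ) :
    Hset (hatMaps f b) 0 ∩ Hset (hatMaps g c) 0
      = Hset (hatMaps (Fin.append f g) (Fin.append b c)) (0 : Fin (m + m' + 1) → ℝ) := by
  ext y
  simp only [mem_inter_iff]
  rw [mem_hatCone, mem_hatCone, mem_hatCone]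
  constructor
  · rintro ⟨⟨h1, h2⟩, ⟨h3, -⟩⟩
    refine ⟨fun i => ?_, h2⟩
    refine Fin.addCases (fun i => ?_) (fun i => ?_) i
    · simpa [Fin.append_left] using h1 i
    · simpa [Fin.append_right] using h3 i
  · rintro ⟨h1, h2⟩
    refine ⟨⟨fun i => ?_, h2⟩, ⟨fun i => ?_, h2⟩⟩
    · have := h1 (Fin.castAdd m' i)
      simpa [Fin.append_left] using this
    · have := h1 (Fin.natAdd m i)
      simpa [Fin.append_right] using this

theorem hat_snoc {m : ℕ} (f : Fin m → E →ₗ[ℝ] ℝ) (b : Fin m → ℝ)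
    (x : E →ₗ[ℝ] ℝ) (β : ℝ) :
    Hset (hatMaps (Fin.snoc f x) (Fin.snoc b β)) (0 : Fin (m+2) → ℝ)
      = Hset (hatMaps f b) 0 ∩ {y : E × ℝ | x y.1 - β * y.2 ≤ 0} := by
  ext y
  simp only [mem_inter_iff, mem_setOf_eq]
  rw [mem_hatCone, mem_hatCone]
  constructor
  · rintro ⟨h1, h2⟩
    refine ⟨⟨fun i => ?_, h2⟩, ?_⟩
    · have := h1 (Fin.castSucc i)
      simpa [Fin.snoc_castSucc] using this
    · have := h1 (Fin.last m)
      simp only [Fin.snoc_last] at this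
      linarith [this]
  · rintro ⟨⟨h1, h2⟩, h3⟩
    refine ⟨fun i => ?_, h2⟩
    refine Fin.lastCases ?_ (fun i => ?_) i
    · simp only [Fin.snoc_last]
      linarith [h3]
    · simpa [Fin.snoc_castSucc] using h1 i

theorem comp_inl_apply (x : (E × ℝ) →ₗ[ℝ] ℝ) (u : E) :
    (x.comp (LinearMap.inl ℝ E ℝ)) u = x (u, 0) := by
  simp [LinearMap.inl_apply]

theorem faceSet_prodZero (S : Set E) (x : (E × ℝ) →ₗ[ℝ] ℝ) :
    faceSet (S ×ˢ ({0} : Set ℝ)) x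
      = (faceSet S (x.comp (LinearMap.inl ℝ E ℝ))) ×ˢ ({0} : Set ℝ) := by
  ext y
  rcases y with ⟨u, s⟩
  simp only [faceSet, mem_setOf_eq, mem_prod, mem_singleton_iff]
  constructor
  · rintro ⟨⟨hu, hs⟩, hmin⟩
    subst hs
    refine ⟨⟨hu, fun v hv => ?_⟩, rfl⟩
    rw [comp_inl_apply, comp_inl_apply]
    exact hmin (v, 0) ⟨hv, rfl⟩
  · rintro ⟨⟨hu, hmin⟩, hs⟩
    subst hs
    refine ⟨⟨hu, rfl⟩, ?_⟩
    rintro ⟨v, r⟩ ⟨hv, hr⟩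
    subst hr
    have := hmin v hv
    rw [comp_inl_apply, comp_inl_apply] at this
    exact this

/-- The functional cutting out the cone over a face, or a rec-cone face at
height 0. -/
theorem hat_nonneg_face {m : ℕ} {f : Fin m → E →ₗ[ℝ] ℝ} {b : Fin m → ℝ}
    (hne : (Hset f b).Nonempty) {x : E →ₗ[ℝ] ℝ} {β : ℝ}
    (hβ : ∀ v ∈ Hset f b, -β ≤ x v) :
    ∀ y ∈ Hset (hatMaps f b) 0, 0 ≤ x y.1 + β * y.2 := by
  intro y hy
  rw [mem_hatCone] at hy
  obtain ⟨h1, h2⟩ := hy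
  rcases eq_or_lt_of_le h2 with h0 | hpos
  · rw [← h0, mul_zero, add_zero]
    have hrecnn : ∀ u ∈ Hset f (0 : Fin m → ℝ), 0 ≤ x u + 0 := by
      obtain ⟨p, hp⟩ := hne
      have := hset_rec_nonneg_of_bddBelow hp (fun v hv => hβ v hv)
      intro u hu
      rw [add_zero]
      exact this u hu
    have hu0 : y.1 ∈ Hset f 0 := by
      intro i
      have := h1 i
      rw [← h0] at this
      simpa using this
    have := hrecnn y.1 hu0
    linarith
  · have hq : y.2⁻¹ • y.1 ∈ Hset f b := by
      intro i
      have he : f i (y.2⁻¹ • y.1) = y.2⁻¹ * f i y.1 := by simp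
      rw [he, inv_mul_le_iff₀ hpos]
      exact h1 i
    have := hβ _ hq
    have he : x (y.2⁻¹ • y.1) = y.2⁻¹ * x y.1 := by simp
    rw [he] at this
    have h3 : -β * y.2 ≤ y.2⁻¹ * x y.1 * y.2 := mul_le_mul_of_nonneg_right this h2
    have h4 : y.2⁻¹ * x y.1 * y.2 = x y.1 := by
      field_simp
    nlinarith



theorem hat_scale {m : ℕ} {f : Fin m → E →ₗ[ℝ] ℝ} {b : Fin m → ℝ} {y : E × ℝ}
    (hy : y ∈ Hset (hatMaps f b) 0) (hpos : 0 < y.2) :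
    y.2⁻¹ • y.1 ∈ Hset f b := by
  rw [mem_hatCone] at hy
  intro i
  have he : f i (y.2⁻¹ • y.1) = y.2⁻¹ * f i y.1 := by simp
  rw [he, inv_mul_le_iff₀ hpos]
  exact hy.1 i

/-- The cone over a face of `Λ` is a face of the cone over `Λ`. -/
theorem coneOver_faceSet_eq [FiniteDimensional ℝ E] {m : ℕ} {f : Fin m → E →ₗ[ℝ] ℝ}
    {b : Fin m → ℝ} {x : E →ₗ[ℝ] ℝ} {q : E} (hq : q ∈ faceSet (Hset f b) x) :
    ∃ xh : (E × ℝ) →ₗ[ℝ] ℝ,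
      faceSet (Hset (hatMaps f b) 0) xh = coneOver (faceSet (Hset f b) x) := by
  have hne : (Hset f b).Nonempty := ⟨q, hq.1⟩
  obtain ⟨xh, hxh⟩ : ∃ xh : (E × ℝ) →ₗ[ℝ] ℝ,
      xh = x.comp (LinearMap.fst ℝ E ℝ) - (x q) • (LinearMap.snd ℝ E ℝ) := ⟨_, rfl⟩
  refine ⟨xh, ?_⟩
  have happ : ∀ y : E × ℝ, xh y = x y.1 - x q * y.2 := by
    intro y
    rw [hxh]
    simp
  have hnn : ∀ y ∈ Hset (hatMaps f b) 0, 0 ≤ xh y := by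
    intro y hy
    rw [happ]
    have h1 := hat_nonneg_face hne (β := -(x q))
      (fun v hv => by
        have := hq.2 v hv
        linarith) y hy
    have h2 : x y.1 + -(x q) * y.2 = x y.1 - x q * y.2 := by ring
    linarith
  rw [faceSet_hsetZero_eq hnn]
  have hFd : faceSet (Hset f b) x = Hset (Fin.snoc f x) (Fin.snoc b (x q)) := by
    rw [faceSet_eq_inter hq, hset_inter_halfspace]
  rw [hFd, coneOver_eq_hat (by rw [← hFd]; exact ⟨q, hq⟩), hat_snoc]
  ext y
  simp only [mem_inter_iff, mem_setOf_eq, happ]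

/-- A face of the recession cone, at height zero, is a face of the cone over
`Λ`. -/
theorem prodZero_face_of_coneOver [FiniteDimensional ℝ E] {m : ℕ}
    {f : Fin m → E →ₗ[ℝ] ℝ} {b : Fin m → ℝ} (hne : (Hset f b).Nonempty)
    {x : E →ₗ[ℝ] ℝ} (hxnn : ∀ u ∈ Hset f (0 : Fin m → ℝ), 0 ≤ x u) :
    ∃ xh : (E × ℝ) →ₗ[ℝ] ℝ,
      faceSet (Hset (hatMaps f b) 0) xh
        = (Hset f 0 ∩ {u | x u ≤ 0}) ×ˢ ({0} : Set ℝ) := by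
  obtain ⟨p, hp, hpmin⟩ := hset_min_attained hne hxnn
  obtain ⟨β, hβ⟩ : ∃ β : ℝ, β = 1 + max 0 (-(x p)) := ⟨_, rfl⟩
  have hβ1 : ∀ v ∈ Hset f b, 1 ≤ x v + β := by
    intro v hv
    have h1 := hpmin v hv
    have h2 : -(x p) ≤ max 0 (-(x p)) := le_max_right _ _
    rw [hβ]
    linarith
  obtain ⟨xh, hxh⟩ : ∃ xh : (E × ℝ) →ₗ[ℝ] ℝ,
      xh = x.comp (LinearMap.fst ℝ E ℝ) + β • (LinearMap.snd ℝ E ℝ) := ⟨_, rfl⟩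
  refine ⟨xh, ?_⟩
  have happ : ∀ y : E × ℝ, xh y = x y.1 + β * y.2 := by
    intro y
    rw [hxh]
    simp
  have hnn : ∀ y ∈ Hset (hatMaps f b) 0, 0 ≤ xh y := by
    intro y hy
    rw [happ]
    exact hat_nonneg_face hne (fun v hv => by linarith [hβ1 v hv]) y hy
  rw [faceSet_hsetZero_eq hnn]
  ext y
  rcases y with ⟨u, s⟩
  simp only [mem_inter_iff, mem_setOf_eq, mem_prod, mem_singleton_iff, happ]
  constructor
  · rintro ⟨h1, h2⟩
    have h2' := h1
    rw [mem_hatCone] at h2'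
    have hs0 : s = 0 := by
      by_contra hsne
      have hpos : 0 < s := lt_of_le_of_ne h2'.2 (Ne.symm hsne)
      have hq := hat_scale h1 hpos
      have := hβ1 _ hq
      have he : x (s⁻¹ • u) = s⁻¹ * x u := by simp
      rw [he] at this
      -- 1 ≤ s⁻¹ * x u + β, so s ≤ x u + β s
      have h3 : s * 1 ≤ s * (s⁻¹ * x u + β) := mul_le_mul_of_nonneg_left this hpos.le
      rw [mul_one, mul_add, ← mul_assoc, mul_inv_cancel₀ (ne_of_gt hpos), one_mul] at h3
      nlinarith
    subst hs0
    have hu : u ∈ Hset f 0 := by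
      intro i
      have := h2'.1 i
      simpa using this
    refine ⟨⟨hu, ?_⟩, rfl⟩
    linarith [h2]
  · rintro ⟨⟨hu, hxu⟩, hs⟩
    subst hs
    constructor
    · have : ((u, (0:ℝ)) : E × ℝ) ∈ Hset (hatMaps f b) 0 := mem_hat_zero.mpr hu
      exact this
    · linarith [hxu]



theorem member_package [FiniteDimensional ℝ E] {P : Set (Set E)} (hP : IsPolyComplex P)
    {Λ : Set E} (hΛ : Λ ∈ P) :
    ∃ (m : ℕ) (f : Fin m → E →ₗ[ℝ] ℝ) (b : Fin m → ℝ),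
      Λ = Hset f b ∧ (Hset f b).Nonempty ∧ recPoly Λ = Hset f 0 ∧
      coneOver Λ = Hset (hatMaps f b) 0 ∧
      recPoly Λ ×ˢ ({0} : Set ℝ)
        = Hset (Fin.snoc (hatMaps f 0) (LinearMap.snd ℝ E ℝ)) (0 : Fin (m+2) → ℝ) := by
  obtain ⟨m, f, b, hd0⟩ := (hP.2.2.1 Λ hΛ).1
  have hd : Λ = Hset f b := hd0
  have hne : (Hset f b).Nonempty := by rw [← hd]; exact (hP.2.2.1 Λ hΛ).2
  have hrec : recPoly Λ = Hset f 0 := by rw [hd]; exact recPoly_hset hne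
  refine ⟨m, f, b, hd, hne, hrec, ?_, ?_⟩
  · rw [hd]
    exact coneOver_eq_hat hne
  · rw [hrec]
    exact prodZero_eq_hset f

/-- `(recPoly Λ ∩ recPoly Λ') × {0}` is a face of `coneOver Λ`. -/
theorem keyA [FiniteDimensional ℝ E] {P : Set (Set E)} (hP : IsPolyComplex P)
    (hconv : Convex ℝ (polySupport P)) {Λ Λ' : Set E} (hΛ : Λ ∈ P) (hΛ' : Λ' ∈ P) :
    ∃ xh : (E × ℝ) →ₗ[ℝ] ℝ,
      faceSet (coneOver Λ) xh = (recPoly Λ ∩ recPoly Λ') ×ˢ ({0} : Set ℝ) := by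
  obtain ⟨m, f, b, hd, hne, hrec, hcone, -⟩ := member_package hP hΛ
  obtain ⟨x, hxnn, heq⟩ := rec_inter_isFaceOf hP hconv hΛ hΛ'
  have hxnn0 : ∀ u ∈ Hset f (0 : Fin m → ℝ), 0 ≤ x u := by
    rw [← hrec]
    exact hxnn
  have heq0 : recPoly Λ ∩ recPoly Λ' = Hset f 0 ∩ {u | x u ≤ 0} := by
    rw [heq, hrec]
    exact faceSet_hsetZero_eq hxnn0
  obtain ⟨xh, hxh⟩ := prodZero_face_of_coneOver hne hxnn0
  refine ⟨xh, ?_⟩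
  rw [hcone, hxh, heq0]

/-- `(recPoly Λ ∩ recPoly Λ') × {0}` is a face of `recPoly Λ × {0}`. -/
theorem keyB [FiniteDimensional ℝ E] {P : Set (Set E)} (hP : IsPolyComplex P)
    (hconv : Convex ℝ (polySupport P)) {Λ Λ' : Set E} (hΛ : Λ ∈ P) (hΛ' : Λ' ∈ P) :
    ∃ xh : (E × ℝ) →ₗ[ℝ] ℝ,
      faceSet (recPoly Λ ×ˢ ({0} : Set ℝ)) xh
        = (recPoly Λ ∩ recPoly Λ') ×ˢ ({0} : Set ℝ) := by
  obtain ⟨x, hxnn, heq⟩ := rec_inter_isFaceOf hP hconv hΛ hΛ'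
  refine ⟨x.comp (LinearMap.fst ℝ E ℝ), ?_⟩
  rw [faceSet_prodZero]
  have hcomp : (x.comp (LinearMap.fst ℝ E ℝ)).comp (LinearMap.inl ℝ E ℝ) = x := by
    apply LinearMap.ext
    intro u
    simp
  rw [hcomp, ← heq]

theorem interPP {σ σ' : Set E} :
    (σ ×ˢ ({0} : Set ℝ)) ∩ (σ' ×ˢ ({0} : Set ℝ)) = (σ ∩ σ') ×ˢ ({0} : Set ℝ) := by
  rw [Set.prod_inter_prod, inter_self]

theorem interCP [FiniteDimensional ℝ E] {P : Set (Set E)} (hP : IsPolyComplex P)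
    {Λ Λ' : Set E} (hΛ : Λ ∈ P) (hΛ' : Λ' ∈ P) :
    coneOver Λ ∩ (recPoly Λ' ×ˢ ({0} : Set ℝ))
      = (recPoly Λ ∩ recPoly Λ') ×ˢ ({0} : Set ℝ) := by
  obtain ⟨m, f, b, hd, hne, hrec, hcone, -⟩ := member_package hP hΛ
  ext y
  rcases y with ⟨u, s⟩
  simp only [mem_inter_iff, mem_prod, mem_singleton_iff]
  constructor
  · rintro ⟨h1, h2, h3⟩
    subst h3
    rw [hcone] at h1
    refine ⟨⟨?_, h2⟩, rfl⟩
    rw [hrec]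
    exact mem_hat_zero.mp h1
  · rintro ⟨⟨h1, h2⟩, h3⟩
    subst h3
    refine ⟨?_, h2, rfl⟩
    rw [hcone]
    apply mem_hat_zero.mpr
    rw [← hrec]
    exact h1

theorem interCC0 [FiniteDimensional ℝ E] {P : Set (Set E)} (hP : IsPolyComplex P)
    {Λ Λ' : Set E} (hΛ : Λ ∈ P) (hΛ' : Λ' ∈ P)
    (hnopos : ∀ y ∈ coneOver Λ ∩ coneOver Λ', y.2 ≤ 0) :
    coneOver Λ ∩ coneOver Λ' = (recPoly Λ ∩ recPoly Λ') ×ˢ ({0} : Set ℝ) := by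
  obtain ⟨m, f, b, hd, hne, hrec, hcone, -⟩ := member_package hP hΛ
  obtain ⟨m', g, c, hd', hne', hrec', hcone', -⟩ := member_package hP hΛ'
  ext y
  rcases y with ⟨u, s⟩
  simp only [mem_inter_iff, mem_prod, mem_singleton_iff]
  constructor
  · rintro ⟨h1, h2⟩
    have hs0 : s = 0 := by
      have hle := hnopos (u, s) ⟨h1, h2⟩
      have : 0 ≤ s := by
        rw [hcone] at h1
        exact (mem_hatCone.mp h1).2
      exact le_antisymm hle this
    subst hs0
    rw [hcone] at h1
    rw [hcone'] at h2
    exact ⟨⟨by rw [hrec]; exact mem_hat_zero.mp h1, by rw [hrec']; exact mem_hat_zero.mp h2⟩, rfl⟩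
  · rintro ⟨⟨h1, h2⟩, h3⟩
    subst h3
    constructor
    · rw [hcone]
      apply mem_hat_zero.mpr
      rw [← hrec]
      exact h1
    · rw [hcone']
      apply mem_hat_zero.mpr
      rw [← hrec']
      exact h2

/-- If the cones over two members meet at positive height, the members meet,
the intersection of cones is the cone over the intersection, and it is a face
of each cone. -/
theorem interCCpos [FiniteDimensional ℝ E] {P : Set (Set E)} (hP : IsPolyComplex P)
    {Λ Λ' : Set E} (hΛ : Λ ∈ P) (hΛ' : Λ' ∈ P) {y : E × ℝ}
    (hy : y ∈ coneOver Λ ∩ coneOver Λ') (hypos : 0 < y.2) :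
    ∃ xh : (E × ℝ) →ₗ[ℝ] ℝ,
      coneOver Λ ∩ coneOver Λ' = faceSet (coneOver Λ) xh := by
  obtain ⟨m, f, b, hd, hne, hrec, hcone, -⟩ := member_package hP hΛ
  obtain ⟨m', g, c, hd', hne', hrec', hcone', -⟩ := member_package hP hΛ'
  have hq1 : y.2⁻¹ • y.1 ∈ Hset f b := hat_scale (by rw [← hcone]; exact hy.1) hypos
  have hq2 : y.2⁻¹ • y.1 ∈ Hset g c := hat_scale (by rw [← hcone']; exact hy.2) hypos
  have hmeet : (Λ ∩ Λ').Nonempty := ⟨y.2⁻¹ • y.1, by rw [hd]; exact hq1, by rw [hd']; exact hq2⟩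
  obtain ⟨⟨hfne, x, hfaceeq⟩, -⟩ := hP.2.2.2.2 Λ hΛ Λ' hΛ' hmeet
  have hqface : y.2⁻¹ • y.1 ∈ faceSet (Hset f b) x := by
    rw [← hd, ← hfaceeq]
    exact ⟨by rw [hd]; exact hq1, by rw [hd']; exact hq2⟩
  obtain ⟨xh, hxh⟩ := coneOver_faceSet_eq hqface
  refine ⟨xh, ?_⟩
  have hint : coneOver Λ ∩ coneOver Λ' = coneOver (Λ ∩ Λ') := by
    have hd'' : Λ ∩ Λ' = Hset (Fin.append f g) (Fin.append b c) := by
      rw [hd, hd', hset_inter_hset]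
    rw [hcone, hcone', hat_inter, hd'']
    exact (coneOver_eq_hat (by rw [← hd'']; exact hmeet)).symm
  rw [hint, hcone, hxh, ← hd, ← hfaceeq]



theorem coneComplex_conic [FiniteDimensional ℝ E] {P : Set (Set E)} (hP : IsPolyComplex P)
    (hconv : Convex ℝ (polySupport P)) : IsConicPolyComplex (coneComplex P) := by
  classical
  constructor
  · refine ⟨?_, ?_, ?_, ?_, ?_⟩
    · -- nonempty
      obtain ⟨Λ, hΛ⟩ := hP.1
      exact ⟨coneOver Λ, Or.inl ⟨Λ, hΛ, rfl⟩⟩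
    · -- finite
      have himg : coneComplex P
          = (coneOver '' P) ∪ ((fun Λ => recPoly Λ ×ˢ ({0} : Set ℝ)) '' P) := by
        ext C
        simp [coneComplex, image, eq_comm]
      rw [himg]
      exact (hP.2.1.image _).union (hP.2.1.image _)
    · -- polyhedra and nonempty
      rintro S (⟨Λ, hΛ, rfl⟩ | ⟨Λ, hΛ, rfl⟩)
      · obtain ⟨m, f, b, hd, hne, hrec, hcone, -⟩ := member_package hP hΛ
        refine ⟨⟨m+1, hatMaps f b, 0, hcone⟩, ⟨0, ?_⟩⟩
        rw [hcone]
        exact zero_mem_hset_zero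
      · obtain ⟨m, f, b, hd, hne, hrec, -, hprod⟩ := member_package hP hΛ
        refine ⟨⟨m+2, _, 0, hprod⟩, ⟨0, ?_⟩⟩
        rw [hprod]
        exact zero_mem_hset_zero
    · -- closed under faces
      rintro S (⟨Λ, hΛ, rfl⟩ | ⟨Λ, hΛ, rfl⟩) F ⟨hFne, xh, hFeq⟩
      · -- faces of coneOver Λ
        obtain ⟨m, f, b, hd, hne, hrec, hcone, -⟩ := member_package hP hΛ
        rw [hcone] at hFeq
        have hFne' : (faceSet (Hset (hatMaps f b) 0) xh).Nonempty := by
          rw [← hFeq]; exact hFne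
        have hnn := faceSet_hsetZero_nonneg hFne'
        have hF0 : F = Hset (hatMaps f b) 0 ∩ {y | xh y ≤ 0} := by
          rw [hFeq]
          exact faceSet_hsetZero_eq hnn
        obtain ⟨x1, hx1⟩ : ∃ x1 : E →ₗ[ℝ] ℝ, x1 = xh.comp (LinearMap.inl ℝ E ℝ) := ⟨_, rfl⟩
        have hx1app : ∀ u : E, x1 u = xh (u, 0) := by
          intro u
          rw [hx1]
          exact comp_inl_apply xh u
        have hsplit : ∀ y : E × ℝ, xh y = x1 y.1 + y.2 * xh (0, 1) := by
          intro y
          rw [hx1app]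
          exact pair_split xh y.1 y.2
        by_cases hpos : ∃ y ∈ Hset (hatMaps f b) 0, xh y ≤ 0 ∧ 0 < y.2
        · -- positive height: F is the cone over a face of Λ
          obtain ⟨y, hy, hxy, hypos⟩ := hpos
          have hqΛ : y.2⁻¹ • y.1 ∈ Hset f b := hat_scale hy hypos
          have hxhy0 : xh y = 0 := le_antisymm hxy (hnn y hy)
          have hq1eq : x1 (y.2⁻¹ • y.1) = -xh (0, 1) := by
            have hpair : ((y.2⁻¹ • y.1, (1:ℝ)) : E × ℝ) = y.2⁻¹ • y :=
              Prod.ext rfl (by rw [Prod.smul_snd, smul_eq_mul, inv_mul_cancel₀ (ne_of_gt hypos)])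
            have h1 : xh (y.2⁻¹ • y.1, (1:ℝ)) = y.2⁻¹ * xh y := by
              rw [hpair, map_smul, smul_eq_mul]
            rw [hsplit (y.2⁻¹ • y.1, (1:ℝ))] at h1
            simp only [hxhy0, mul_zero] at h1
            linarith [h1]
          have hqface : y.2⁻¹ • y.1 ∈ faceSet (Hset f b) x1 := by
            refine ⟨hqΛ, fun v hv => ?_⟩
            have hv1 : ((v, (1:ℝ)) : E × ℝ) ∈ Hset (hatMaps f b) 0 := mem_hat_one.mpr hv
            have h2 := hnn _ hv1
            rw [hsplit (v, 1)] at h2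
            rw [hq1eq]
            simp only at h2
            linarith
          have hGP : faceSet Λ x1 ∈ P := by
            apply hP.2.2.2.1 Λ hΛ
            refine ⟨⟨y.2⁻¹ • y.1, ?_⟩, x1, rfl⟩
            rw [hd]
            exact hqface
          refine Or.inl ⟨faceSet Λ x1, hGP, ?_⟩
          have hpoint : ∀ y' : E × ℝ, xh y' = x1 y'.1 - x1 (y.2⁻¹ • y.1) * y'.2 := by
            intro y'
            rw [hsplit y', hq1eq]
            ring
          have hcG : coneOver (faceSet Λ x1)
              = Hset (hatMaps f b) 0 ∩ {y' : E × ℝ | x1 y'.1 - x1 (y.2⁻¹ • y.1) * y'.2 ≤ 0} := by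
            have hFd : faceSet Λ x1 = Hset (Fin.snoc f x1)
                (Fin.snoc b (x1 (y.2⁻¹ • y.1))) := by
              conv_lhs => rw [hd]
              rw [faceSet_eq_inter hqface, hset_inter_halfspace]
            rw [hFd, coneOver_eq_hat (by rw [← hFd, hd]; exact ⟨_, hqface⟩), hat_snoc]
          rw [hF0, hcG]
          congr 1
          ext y'
          simp only [mem_setOf_eq, hpoint]
        · -- height zero: F is a face of the recession cone at height 0
          push_neg at hpos
          have hx1nn : ∀ u ∈ Hset f (0 : Fin m → ℝ), 0 ≤ x1 u := by
            intro u hu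
            have := hnn (u, 0) (mem_hat_zero.mpr hu)
            rw [← hx1app] at this
            exact this
          have hFprod : F = (Hset f 0 ∩ {u | x1 u ≤ 0}) ×ˢ ({0} : Set ℝ) := by
            rw [hF0]
            ext y'
            rcases y' with ⟨u, s⟩
            simp only [mem_inter_iff, mem_setOf_eq, mem_prod, mem_singleton_iff]
            constructor
            · rintro ⟨h1, h2⟩
              have hs0 : s = 0 :=
                le_antisymm (hpos (u, s) h1 h2) (mem_hatCone.mp h1).2
              subst hs0
              refine ⟨⟨mem_hat_zero.mp h1, ?_⟩, rfl⟩
              rw [hx1app]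
              exact h2
            · rintro ⟨⟨hu, hxu⟩, hs⟩
              subst hs
              refine ⟨mem_hat_zero.mpr hu, ?_⟩
              rw [← hx1app]
              exact hxu
          have hfs : faceSet (recPoly Λ) x1 = Hset f 0 ∩ {u | x1 u ≤ 0} := by
            rw [hrec]
            exact faceSet_hsetZero_eq hx1nn
          obtain ⟨y0, hy0⟩ := hFne
          rw [hFprod] at hy0
          obtain ⟨F', hF'P, hF'⟩ := face_rec_mem hP hΛ (by rw [hfs]; exact ⟨y0.1, hy0.1⟩)
          refine Or.inr ⟨F', hF'P, ?_⟩
          rw [hFprod, ← hfs, ← hF']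
      · -- faces of recPoly Λ ×ˢ {0}
        rw [faceSet_prodZero] at hFeq
        obtain ⟨y0, hy0⟩ := hFne
        have hy0' := hy0
        rw [hFeq] at hy0'
        obtain ⟨F', hF'P, hF'⟩ := face_rec_mem hP hΛ ⟨y0.1, (mem_prod.mp hy0').1⟩
        refine Or.inr ⟨F', hF'P, ?_⟩
        rw [hFeq, hF']
    · -- common faces
      rintro S (⟨Λ, hΛ, rfl⟩ | ⟨Λ, hΛ, rfl⟩) T (⟨Λ', hΛ', rfl⟩ | ⟨Λ', hΛ', rfl⟩) hmeet
      · -- cone ∩ cone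
        by_cases hpos : ∃ y ∈ coneOver Λ ∩ coneOver Λ', 0 < y.2
        · obtain ⟨y, hy, hypos⟩ := hpos
          constructor
          · obtain ⟨xh, hxh⟩ := interCCpos hP hΛ hΛ' hy hypos
            exact ⟨hmeet, xh, hxh⟩
          · obtain ⟨xh, hxh⟩ := interCCpos hP hΛ' hΛ (by rw [inter_comm]; exact hy) hypos
            refine ⟨hmeet, xh, ?_⟩
            rw [inter_comm]
            exact hxh
        · push_neg at hpos
          have hint := interCC0 hP hΛ hΛ' hpos
          constructor
          · obtain ⟨xh, hxh⟩ := keyA hP hconv hΛ hΛ'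
            exact ⟨hmeet, xh, by rw [hint, ← hxh]⟩
          · obtain ⟨xh, hxh⟩ := keyA hP hconv hΛ' hΛ
            refine ⟨hmeet, xh, ?_⟩
            rw [hint, inter_comm (recPoly Λ)]
            exact hxh.symm
      · -- cone ∩ prod
        have hint := interCP hP hΛ hΛ'
        constructor
        · obtain ⟨xh, hxh⟩ := keyA hP hconv hΛ hΛ'
          exact ⟨hmeet, xh, by rw [hint, ← hxh]⟩
        · obtain ⟨xh, hxh⟩ := keyB hP hconv hΛ' hΛ
          refine ⟨hmeet, xh, ?_⟩
          rw [hint, inter_comm (recPoly Λ)]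
          exact hxh.symm
      · -- prod ∩ cone
        have hint : (recPoly Λ ×ˢ ({0} : Set ℝ)) ∩ coneOver Λ'
            = (recPoly Λ ∩ recPoly Λ') ×ˢ ({0} : Set ℝ) := by
          rw [inter_comm, interCP hP hΛ' hΛ, inter_comm (recPoly Λ')]
        constructor
        · obtain ⟨xh, hxh⟩ := keyB hP hconv hΛ hΛ'
          exact ⟨hmeet, xh, by rw [hint, ← hxh]⟩
        · obtain ⟨xh, hxh⟩ := keyA hP hconv hΛ' hΛ
          refine ⟨hmeet, xh, ?_⟩
          rw [hint, inter_comm (recPoly Λ)]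
          exact hxh.symm
      · -- prod ∩ prod
        have hint : (recPoly Λ ×ˢ ({0} : Set ℝ)) ∩ (recPoly Λ' ×ˢ ({0} : Set ℝ))
            = (recPoly Λ ∩ recPoly Λ') ×ˢ ({0} : Set ℝ) := interPP
        constructor
        · obtain ⟨xh, hxh⟩ := keyB hP hconv hΛ hΛ'
          exact ⟨hmeet, xh, by rw [hint, ← hxh]⟩
        · obtain ⟨xh, hxh⟩ := keyB hP hconv hΛ' hΛ
          refine ⟨hmeet, xh, ?_⟩
          rw [hint, inter_comm (recPoly Λ)]
          exact hxh.symm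
  · -- polyhedral cones
    rintro S (⟨Λ, hΛ, rfl⟩ | ⟨Λ, hΛ, rfl⟩)
    · obtain ⟨m, f, b, hd, hne, hrec, hcone, -⟩ := member_package hP hΛ
      rw [hcone]
      exact hset_zero_isPolyhedralCone _
    · obtain ⟨m, f, b, hd, hne, hrec, -, hprod⟩ := member_package hP hΛ
      rw [hprod]
      exact hset_zero_isPolyhedralCone _


/-- Corollary 8: if the support of a polyhedral complex `Π`
is convex, then `rec(Π)` and `c(Π)` are conic polyhedral complexes. -/
theorem statement8 {n : ℕ} (P : Set (Set (Fin n → ℝ))) (hP : IsPolyComplex P)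
    (hconv : Convex ℝ (polySupport P)) :
    IsConicPolyComplex (recComplex P) ∧ IsConicPolyComplex (coneComplex P) := by
  exact ⟨recComplex_conic hP hconv, coneComplex_conic hP hconv⟩
end
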